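/- arXiv:1907.02578 — 4 statements merged into one kernel-verified Lean document; each statement's English description precedes it below -/
import Mathlib

section
/- For every integer x ≥ 1 with P(M_τ = x) > 0, the random variables θ_τ and τ − θ_τ are independent under the conditional probability measure P(· | M_τ = x): for all integers k, j ≥ 1, P(θ_τ = k, τ − θ_τ = j | M_τ = x) = P(θ_τ = k | M_τ = x) · P(τ − θ_τ = j | M_τ = x). -/
open MeasureTheory ProbabilityTheory Filter Real

variable {Ω : Type*}

/-- Partial sums of the increments: `Swalk X n = X 0 + ⋯ + X (n-1)` (the increments are
indexed from `0`, so `X 0` plays the role of `X₁`), with `Swalk X 0 = 0`. -/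
def Swalk (X : ℕ → Ω → ℤ) (n : ℕ) (ω : Ω) : ℤ := ∑ i ∈ Finset.range n, X i ω

/-- `τ = inf {n ≥ 1 : S n ≤ 0}` (junk value `0` when the walk never becomes nonpositive). -/
noncomputable def tauN (X : ℕ → Ω → ℤ) (ω : Ω) : ℕ :=
  sInf {n : ℕ | 1 ≤ n ∧ Swalk X n ω ≤ 0}

/-- `M_τ = max_{k ≤ τ} S k`. -/
noncomputable def Mtau (X : ℕ → Ω → ℤ) (ω : Ω) : ℤ :=
  (Finset.range (tauN X ω + 1)).sup'
    (Finset.nonempty_range_iff.mpr (Nat.succ_ne_zero _)) (fun k => Swalk X k ω)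

/-- `θ_τ = min {n ≥ 0 : S n = M_τ}`. -/
noncomputable def thetaTau (X : ℕ → Ω → ℤ) (ω : Ω) : ℕ :=
  sInf {n : ℕ | Swalk X n ω = Mtau X ω}

/-- `M n = max_{k ≤ n} S k`. -/
noncomputable def Mwalk (X : ℕ → Ω → ℤ) (n : ℕ) (ω : Ω) : ℤ :=
  (Finset.range (n + 1)).sup'
    (Finset.nonempty_range_iff.mpr (Nat.succ_ne_zero _)) (fun k => Swalk X k ω)

/-- Probability of an event, as a real number. -/
noncomputable def pr [MeasurableSpace Ω] (P : Measure Ω) (E : Set Ω) : ℝ := (P E).toReal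

/-- Standard normal distribution function `Φ`. -/
noncomputable def stdPhi (x : ℝ) : ℝ :=
  (Real.sqrt (2 * π))⁻¹ * ∫ t in Set.Iic x, Real.exp (-t ^ 2 / 2)

/-!
On `{M_τ = x}` with `x ≥ 1`, the event `{θ_τ = k, τ - θ_τ = j}` says that the walk climbs inside
`(0, x)` until it hits `x` exactly at time `k`, and then, restarted at level `x`, stays in `(0, x]`
until it drops to `≤ 0` exactly `j` steps later. The first condition only involves
`X₁, …, X_k` and the second only `X_{k+1}, …, X_{k+j}`; by independence and stationarity of the
increments the event has probability `p_k q_j` with `q_j` independent of `k`. Summing over `k`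
and `j`, the law of `(θ_τ, τ - θ_τ)` restricted to `{M_τ = x}` is a product measure.
-/

open Set

section Measure

variable {Ω : Type*} [MeasurableSpace Ω] (P : Measure Ω)

lemma measure_setOf_eq_tsum {β : Type*} [Countable β] (W : Ω → β) {E : Ω → Prop}
    (hmeas : ∀ b, MeasurableSet {ω | W ω = b ∧ E ω}) :
    P {ω | E ω} = ∑' b, P {ω | W ω = b ∧ E ω} := by
  rw [← measure_iUnion (fun b b' hbb' => disjoint_left.2 fun ω h h' => hbb' (h.1.symm.trans h'.1))
    hmeas]
  congr 1
  ext ω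
  simp

lemma pr_div_eq_mul_of_measure_eq_mul {U V : Ω → ℕ} {E : Ω → Prop}
    (hmeas : ∀ k j, MeasurableSet {ω | U ω = k ∧ V ω = j ∧ E ω}) {p q : ℕ → ENNReal}
    (hpq : ∀ k j, P {ω | U ω = k ∧ V ω = j ∧ E ω} = p k * q j) (k j : ℕ) :
    pr P {ω | U ω = k ∧ V ω = j ∧ E ω} / pr P {ω | E ω}
      = (pr P {ω | U ω = k ∧ E ω} / pr P {ω | E ω})
        * (pr P {ω | V ω = j ∧ E ω} / pr P {ω | E ω}) := by
  have hU : P {ω | U ω = k ∧ E ω} = p k * ∑' j, q j := by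
    rw [measure_setOf_eq_tsum P V fun j => by simpa only [and_left_comm] using hmeas k j]
    simp_rw [and_left_comm (a := V _ = _), hpq, ENNReal.tsum_mul_left]
  have hV : P {ω | V ω = j ∧ E ω} = (∑' k, p k) * q j := by
    rw [measure_setOf_eq_tsum P U fun k => hmeas k j]
    simp_rw [hpq, ENNReal.tsum_mul_right]
  have hE : P {ω | E ω} = (∑' k, p k) * ∑' j, q j := by
    rw [measure_setOf_eq_tsum P (fun ω => (U ω, V ω))
      fun ⟨k, j⟩ => by simpa only [Prod.mk.injEq, and_assoc] using hmeas k j, ENNReal.tsum_prod']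
    simp_rw [Prod.mk.injEq, and_assoc, hpq, ENNReal.tsum_mul_left, ENNReal.tsum_mul_right]
  have key : pr P {ω | U ω = k ∧ V ω = j ∧ E ω} * pr P {ω | E ω}
      = pr P {ω | U ω = k ∧ E ω} * pr P {ω | V ω = j ∧ E ω} := by
    simp only [pr, ← ENNReal.toReal_mul, hpq, hU, hV, hE]
    ring_nf
  rcases eq_or_ne (pr P {ω | E ω}) 0 with h | h
  · simp [h]
  · rw [div_mul_div_comm, ← key, mul_div_mul_right _ _ h]

end Measure

lemma measurableSet_setOf_mem_of_dependsOn {Ω ι α : Type*} {m : MeasurableSpace Ω}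
    [MeasurableSpace α] [Countable α] [MeasurableSingletonClass α] {Y : Ω → ι → α}
    {D : Set (ι → α)} {s : Set ι} (hs : s.Finite) (hD : DependsOn (· ∈ D) s)
    (hY : ∀ i ∈ s, Measurable[m] fun ω => Y ω i) :
    MeasurableSet[m] {ω | Y ω ∈ D} := by
  have := hs.to_subtype
  have hpre : {ω | Y ω ∈ D} = (fun ω => s.domRestrict (Y ω)) ⁻¹' (s.domRestrict '' D) := by
    ext ω
    refine ⟨fun h => ⟨Y ω, h, rfl⟩, ?_⟩
    rintro ⟨y, hy, hyY⟩
    exact Eq.mp (hD fun i hi => congrFun hyY ⟨i, hi⟩) hy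
  rw [hpre]
  exact (measurable_pi_lambda (fun ω => s.domRestrict (Y ω)) fun i => hY i i.2) .of_discrete

section IID

variable {Ω β : Type*} [MeasurableSpace Ω] {P : Measure Ω} [mβ : MeasurableSpace β]
  {X : ℕ → Ω → β}

lemma identDistrib_shift (hXmeas : ∀ i, Measurable (X i)) (hXindep : iIndepFun X P)
    (hXident : ∀ i, IdentDistrib (X i) (X 0) P P) (k : ℕ) :
    IdentDistrib (fun ω i => X (k + i) ω) (fun ω i => X i ω) P P where
  aemeasurable_fst := (measurable_pi_lambda _ fun i => hXmeas (k + i)).aemeasurable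
  aemeasurable_snd := (measurable_pi_lambda _ hXmeas).aemeasurable
  map_eq := by
    rw [(hXindep.precomp (add_right_injective k)).map_fun_eq_infinitePi_map fun i => hXmeas _,
      hXindep.map_fun_eq_infinitePi_map hXmeas]
    congr 1
    funext i
    exact (hXident (k + i)).map_eq.trans (hXident i).map_eq.symm

variable [Countable β] [MeasurableSingletonClass β]

lemma measure_inter_setOf_shift_mem_eq_mul (hXmeas : ∀ i, Measurable (X i))
    (hXindep : iIndepFun X P) {k : ℕ} {D D' : Set (ℕ → β)} (hD : DependsOn (· ∈ D) (Iio k))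
    {s : Set ℕ} (hs : s.Finite) (hD' : DependsOn (· ∈ D') s) :
    P ({ω | (fun i => X i ω) ∈ D} ∩ {ω | (fun i => X (k + i) ω) ∈ D'})
      = P {ω | (fun i => X i ω) ∈ D} * P {ω | (fun i => X (k + i) ω) ∈ D'} := by
  have hσ (T : Set ℕ) (i) (hi : i ∈ T) : Measurable[⨆ i ∈ T, mβ.comap (X i)] (X i) :=
    (comap_measurable (X i)).mono (le_iSup₂ (f := fun i (_ : i ∈ T) => mβ.comap (X i)) i hi) le_rfl
  have hind := indep_iSup_of_disjoint (fun i => (hXmeas i).comap_le)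
    ((iIndepFun_iff_iIndep _ X P).1 hXindep) (Iio_disjoint_Ici (le_refl k))
  refine (Indep_iff _ _ P).1 hind _ _ ?_ ?_
  · exact measurableSet_setOf_mem_of_dependsOn (finite_Iio k) hD fun i hi => hσ _ i hi
  · exact measurableSet_setOf_mem_of_dependsOn hs hD' fun i _ =>
      hσ _ (k + i) (mem_Ici.2 (Nat.le_add_right k i))

lemma measure_setOf_shift_mem_eq (hXmeas : ∀ i, Measurable (X i)) (hXindep : iIndepFun X P)
    (hXident : ∀ i, IdentDistrib (X i) (X 0) P P) (k : ℕ) {D : Set (ℕ → β)} {s : Set ℕ}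
    (hs : s.Finite) (hD : DependsOn (· ∈ D) s) :
    P {ω | (fun i => X (k + i) ω) ∈ D} = P {ω | (fun i => X i ω) ∈ D} :=
  (identDistrib_shift hXmeas hXindep hXident k).measure_mem_eq
    (measurableSet_setOf_mem_of_dependsOn (Y := id) hs hD fun i _ => measurable_pi_apply i)

end IID

section Walk

variable {Ω : Type*} (X : ℕ → Ω → ℤ) (ω : Ω)

lemma swalk_add (k m : ℕ) :
    Swalk X (k + m) ω = Swalk X k ω + ∑ i ∈ Finset.range m, X (k + i) ω :=
  Finset.sum_range_add (fun i => X i ω) k m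

lemma tauN_eq_iff {n : ℕ} (hn : n ≠ 0) :
    tauN X ω = n ↔ Swalk X n ω ≤ 0 ∧ ∀ i ∈ Ioo 0 n, 0 < Swalk X i ω := by
  constructor
  · rintro rfl
    obtain ⟨-, hτ⟩ := Nat.sInf_mem (Nat.nonempty_of_pos_sInf (Nat.pos_of_ne_zero hn))
    exact ⟨hτ, fun i hi => lt_of_not_ge fun hi' => Nat.notMem_of_lt_sInf hi.2 ⟨hi.1, hi'⟩⟩
  · rintro ⟨hSn, hpos⟩
    refine IsLeast.csInf_eq ⟨⟨Nat.one_le_iff_ne_zero.2 hn, hSn⟩, fun i ⟨hi, hSi⟩ => ?_⟩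
    exact le_of_not_gt fun hin => (hpos i ⟨hi, hin⟩).not_ge hSi

lemma thetaTau_eq_iff {k : ℕ} :
    thetaTau X ω = k ↔ Swalk X k ω = Mtau X ω ∧ ∀ i < k, Swalk X i ω ≠ Mtau X ω := by
  constructor
  · rintro rfl
    obtain ⟨i, -, hi⟩ := Finset.exists_mem_eq_sup' (Finset.nonempty_range_iff.mpr
      (Nat.succ_ne_zero (tauN X ω))) (fun n => Swalk X n ω)
    exact ⟨Nat.sInf_mem (s := {n | Swalk X n ω = Mtau X ω}) ⟨i, hi.symm⟩,
      fun i hi => Nat.notMem_of_lt_sInf hi⟩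
  · rintro ⟨hSk, hmin⟩
    exact IsLeast.csInf_eq ⟨hSk, fun i hi => le_of_not_gt fun hik => hmin i hik hi⟩

lemma mtau_eq_iff {x : ℤ} :
    Mtau X ω = x ↔ (∀ i ≤ tauN X ω, Swalk X i ω ≤ x) ∧ ∃ i ≤ tauN X ω, Swalk X i ω = x := by
  constructor
  · rintro rfl
    obtain ⟨i, hi, hSi⟩ := Finset.exists_mem_eq_sup' (Finset.nonempty_range_iff.mpr
      (Nat.succ_ne_zero (tauN X ω))) (fun n => Swalk X n ω)
    exact ⟨fun i hi => Finset.le_sup' (fun n => Swalk X n ω) (Finset.mem_range_succ_iff.2 hi),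
      i, Finset.mem_range_succ_iff.1 hi, hSi.symm⟩
  · rintro ⟨hle, i, hi, rfl⟩
    exact le_antisymm (Finset.sup'_le _ _ fun n hn => hle n (Finset.mem_range_succ_iff.1 hn))
      (Finset.le_sup' (fun n => Swalk X n ω) (Finset.mem_range_succ_iff.2 hi))

lemma tauN_ne_zero_of_mtau_pos (h : 0 < Mtau X ω) : tauN X ω ≠ 0 := by
  intro hτ
  obtain ⟨-, i, hi, hSi⟩ := (mtau_eq_iff X ω).1 rfl
  obtain rfl : i = 0 := by omega
  simp [Swalk] at hSi
  omega

lemma thetaTau_tauN_mtau_eq_iff {x : ℤ} (hx : 0 < x) {k j : ℕ} :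
    thetaTau X ω = k ∧ tauN X ω - thetaTau X ω = j ∧ Mtau X ω = x ↔
      (∀ i ∈ Ioo 0 k, Swalk X i ω ∈ Ioo 0 x) ∧ Swalk X k ω = x ∧
        (∀ m ∈ Ioo 0 j, Swalk X (k + m) ω ∈ Ioc 0 x) ∧ Swalk X (k + j) ω ≤ 0 := by
  have hS0 : Swalk X 0 ω = 0 := Finset.sum_range_zero _
  constructor
  · rintro ⟨rfl, hj, hM⟩
    obtain ⟨hSτ, hpos⟩ := (tauN_eq_iff X ω (tauN_ne_zero_of_mtau_pos X ω (hM ▸ hx))).1 rfl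
    obtain ⟨hle, i, hi, hSi⟩ := (mtau_eq_iff X ω).1 hM
    obtain ⟨hSθ, hmin⟩ := (thetaTau_eq_iff X ω).1 rfl
    rw [hM] at hSθ hmin
    have hθi : thetaTau X ω ≤ i := le_of_not_gt fun h => hmin i h hSi
    have hθτ : thetaTau X ω ≠ tauN X ω := fun h => by rw [h] at hSθ; omega
    have hτ : tauN X ω = thetaTau X ω + j := by omega
    refine ⟨fun i ⟨hi0, hiθ⟩ => ⟨hpos i ⟨hi0, by omega⟩, (hle i (by omega)).lt_of_ne (hmin i hiθ)⟩,
      hSθ, fun m ⟨hm0, hmj⟩ => ⟨hpos _ ⟨by omega, by omega⟩, hle _ (by omega)⟩, hτ ▸ hSτ⟩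
  · rintro ⟨hasc, hSk, hdesc, hend⟩
    have hk : k ≠ 0 := by rintro rfl; omega
    have hj : j ≠ 0 := by rintro rfl; rw [add_zero] at hend; omega
    have hsplit : ∀ i, i < k ∨ ∃ m, i = k + m := fun i =>
      (lt_or_ge i k).imp_right Nat.exists_eq_add_of_le
    have hτ : tauN X ω = k + j := by
      refine (tauN_eq_iff X ω (by omega)).2 ⟨hend, fun i hi => ?_⟩
      obtain hik | ⟨m, rfl⟩ := hsplit i
      · exact (hasc i ⟨hi.1, hik⟩).1
      · obtain rfl | hm := Nat.eq_zero_or_pos m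
        · rwa [add_zero, hSk]
        · exact (hdesc m ⟨hm, by have := hi.2; omega⟩).1
    have hM : Mtau X ω = x := by
      refine (mtau_eq_iff X ω).2 ⟨fun i hi => ?_, k, by omega, hSk⟩
      obtain hik | ⟨m, rfl⟩ := hsplit i
      · obtain rfl | hi0 := Nat.eq_zero_or_pos i
        · rw [hS0]; exact hx.le
        · exact (hasc i ⟨hi0, hik⟩).2.le
      · obtain rfl | hm := Nat.eq_zero_or_pos m
        · rw [add_zero, hSk]
        · obtain hmj | rfl := lt_or_eq_of_le (show m ≤ j by rw [hτ] at hi; omega)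
          · exact (hdesc m ⟨hm, hmj⟩).2
          · exact hend.trans hx.le
    have hθ : thetaTau X ω = k := by
      refine (thetaTau_eq_iff X ω).2 ⟨hSk.trans hM.symm, fun i hi => hM ▸ ?_⟩
      obtain rfl | hi0 := Nat.eq_zero_or_pos i
      · rw [hS0]; exact hx.ne
      · exact (hasc i ⟨hi0, hi⟩).2.ne
    exact ⟨hθ, by omega, hM⟩

end Walk

def ascentTo (x : ℤ) (k : ℕ) : Set (ℕ → ℤ) :=
  {y | (∀ i ∈ Ioo 0 k, ∑ n ∈ Finset.range i, y n ∈ Ioo 0 x) ∧ ∑ n ∈ Finset.range k, y n = x}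

def descentFrom (x : ℤ) (j : ℕ) : Set (ℕ → ℤ) :=
  {y | (∀ m ∈ Ioo 0 j, x + ∑ n ∈ Finset.range m, y n ∈ Ioc 0 x) ∧
    x + ∑ n ∈ Finset.range j, y n ≤ 0}

lemma sum_range_eq_of_eqOn_Iio {M : Type*} [AddCommMonoid M] {y y' : ℕ → M} {N : ℕ}
    (h : ∀ n ∈ Iio N, y n = y' n) {i : ℕ} (hi : i ≤ N) :
    ∑ n ∈ Finset.range i, y n = ∑ n ∈ Finset.range i, y' n :=
  Finset.sum_congr rfl fun n hn => h n (lt_of_lt_of_le (Finset.mem_range.1 hn) hi)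

lemma dependsOn_mem_ascentTo (x : ℤ) (k : ℕ) : DependsOn (· ∈ ascentTo x k) (Iio k) := by
  intro y y' h
  simp only [ascentTo, mem_ofPred_eq, sum_range_eq_of_eqOn_Iio h le_rfl]
  exact propext (and_congr_left' (forall₂_congr fun i hi => by
    rw [sum_range_eq_of_eqOn_Iio h hi.2.le]))

lemma dependsOn_mem_descentFrom (x : ℤ) (j : ℕ) : DependsOn (· ∈ descentFrom x j) (Iio j) := by
  intro y y' h
  simp only [descentFrom, mem_ofPred_eq, sum_range_eq_of_eqOn_Iio h le_rfl]
  exact propext (and_congr_left' (forall₂_congr fun m hm => by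
    rw [sum_range_eq_of_eqOn_Iio h hm.2.le]))

lemma setOf_thetaTau_tauN_mtau_eq {Ω : Type*} (X : ℕ → Ω → ℤ) {x : ℤ} (hx : 0 < x) (k j : ℕ) :
    {ω | thetaTau X ω = k ∧ tauN X ω - thetaTau X ω = j ∧ Mtau X ω = x}
      = {ω | (fun i => X i ω) ∈ ascentTo x k} ∩ {ω | (fun i => X (k + i) ω) ∈ descentFrom x j} := by
  ext ω
  simp only [mem_ofPred_eq, mem_inter_iff, thetaTau_tauN_mtau_eq_iff X ω hx, ascentTo,
    descentFrom, swalk_add]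
  rw [and_assoc]
  exact and_congr Iff.rfl (and_congr_right fun hk => by rw [hk])

theorem theta_and_tau_minus_theta_cond_indep_general
    {Ω : Type*} [MeasurableSpace Ω] (P : Measure Ω)
    (X : ℕ → Ω → ℤ)
    -- `X` are i.i.d. under `P`
    (hXmeas : ∀ i, Measurable (X i))
    (hXindep : iIndepFun X P)
    (hXident : ∀ i, IdentDistrib (X i) (X 0) P P) :
    ∀ x : ℕ, 1 ≤ x → P {ω | Mtau X ω = (x : ℤ)} ≠ 0 →
      ∀ k j : ℕ, 1 ≤ k → 1 ≤ j →
        pr P {ω | thetaTau X ω = k ∧ tauN X ω - thetaTau X ω = j ∧ Mtau X ω = (x : ℤ)}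
            / pr P {ω | Mtau X ω = (x : ℤ)}
          = (pr P {ω | thetaTau X ω = k ∧ Mtau X ω = (x : ℤ)}
              / pr P {ω | Mtau X ω = (x : ℤ)})
            * (pr P {ω | tauN X ω - thetaTau X ω = j ∧ Mtau X ω = (x : ℤ)}
              / pr P {ω | Mtau X ω = (x : ℤ)}) := by
  intro x hx _ k j _ _
  have hevent := setOf_thetaTau_tauN_mtau_eq X (show (0 : ℤ) < x by exact_mod_cast hx)
  have hasc := dependsOn_mem_ascentTo x
  have hdesc := dependsOn_mem_descentFrom x
  refine pr_div_eq_mul_of_measure_eq_mul P (fun k' j' => ?_) (fun k' j' => ?_) k j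
    (p := fun k' => P {ω | (fun i => X i ω) ∈ ascentTo x k'})
    (q := fun j' => P {ω | (fun i => X i ω) ∈ descentFrom x j'})
  · rw [hevent]
    exact (measurableSet_setOf_mem_of_dependsOn (finite_Iio k') (hasc k') fun i _ => hXmeas i).inter
      (measurableSet_setOf_mem_of_dependsOn (finite_Iio j') (hdesc j') fun i _ => hXmeas (k' + i))
  · rw [hevent, measure_inter_setOf_shift_mem_eq_mul hXmeas hXindep (hasc k') (finite_Iio j')
      (hdesc j'), measure_setOf_shift_mem_eq hXmeas hXindep hXident k' (finite_Iio j') (hdesc j')]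

/-- conditionally on `M_τ = x`, the random variables `θ_τ` and `τ - θ_τ`
are independent. -/
theorem theta_and_tau_minus_theta_cond_indep
    {Ω : Type*} [MeasurableSpace Ω] (P : Measure Ω) [IsProbabilityMeasure P]
    (X : ℕ → Ω → ℤ)
    -- `X` are i.i.d. under `P`
    (hXmeas : ∀ i, Measurable (X i))
    (hXindep : iIndepFun X P)
    (hXident : ∀ i, IdentDistrib (X i) (X 0) P P)
    -- negative drift `E X₁ = -a < 0`
    (a : ℝ) (ha : 0 < a)
    (hXint : Integrable (fun ω => (X 0 ω : ℝ)) P)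
    (hmean : ∫ ω, (X 0 ω : ℝ) ∂P = -a)
    -- Cramér condition `E e^{λ X₁} = 1` for some `λ > 0`
    (l : ℝ) (hl : 0 < l)
    (hcramer : ∫ ω, Real.exp (l * (X 0 ω : ℝ)) ∂P = 1) :
    ∀ x : ℕ, 1 ≤ x → P {ω | Mtau X ω = (x : ℤ)} ≠ 0 →
      ∀ k j : ℕ, 1 ≤ k → 1 ≤ j →
        pr P {ω | thetaTau X ω = k ∧ tauN X ω - thetaTau X ω = j ∧ Mtau X ω = (x : ℤ)}
            / pr P {ω | Mtau X ω = (x : ℤ)}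
          = (pr P {ω | thetaTau X ω = k ∧ Mtau X ω = (x : ℤ)}
              / pr P {ω | Mtau X ω = (x : ℤ)})
            * (pr P {ω | tauN X ω - thetaTau X ω = j ∧ Mtau X ω = (x : ℤ)}
              / pr P {ω | Mtau X ω = (x : ℤ)}) :=
  theta_and_tau_minus_theta_cond_indep_general P X hXmeas hXindep hXident
end

section
/- For every integer r ≥ 0, P(M_n − S_n = r) → V(r)/E[τ₊] as n → ∞, where V(r) = Σ_{j=0}^∞ P(S_j = −r, τ₊ > j). -/
open MeasureTheory ProbabilityTheory Filter Real

variable {Ω : Type*}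

/-!
Split the path at the first time `k ≤ n` at which `max_{i ≤ n} S_i` is attained. Before `k`
the time-reversed walk is a strict ascending run, after `k` the walk never exceeds `S_k`, and the
two pieces are independent, so
`P(M_n - S_n = r) = ∑_{k ≤ n} P(S_1, …, S_k > 0) · P(S_1, …, S_{n-k} ≤ 0, S_{n-k} = -r)`.
Summing over `r` gives `∑_{k ≤ n} P(S_1, …, S_k > 0) · P(τ₊ > n - k) = 1`.

The first factor decreases to some `q`, and `q > 0`: by the strong law the walk is bounded below,
say by `-m`, with positive probability, and `m` initial steps `≥ 1` lift that event above `0`.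
Convolving a summable sequence with one that tends to `q` gives `q` times its sum in the limit,
so `q · E[τ₊] = 1` and `P(M_n - S_n = r) → q · V(r) = V(r) / E[τ₊]`.
-/

open Finset Topology Function

def walk (x : ℕ → ℤ) (n : ℕ) : ℤ := ∑ i ∈ range n, x i

def walkStaysIn (s : Set ℤ) (k : ℕ) : Set (ℕ → ℤ) := {x | ∀ i, 1 ≤ i → i ≤ k → walk x i ∈ s}

def nonposEndingAt (r k : ℕ) : Set (ℕ → ℤ) :=
  {x | walk x k = -(r : ℤ) ∧ x ∈ walkStaysIn (Set.Iic 0) k}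

section Walk

variable {x : ℕ → ℤ}

lemma walk_add (k m : ℕ) : walk x (k + m) = walk x k + walk (fun i => x (k + i)) m :=
  sum_range_add x k m

lemma walk_reverse {k i : ℕ} (hi : i ≤ k) :
    walk (fun j => x (k - 1 - j)) i = walk x k - walk x (k - i) := by
  obtain ⟨l, rfl⟩ : ∃ l, k = l + i := ⟨k - i, by omega⟩
  rw [walk_add, Nat.add_sub_cancel, add_sub_cancel_left, walk, walk,
    ← sum_range_reflect (fun j => x (l + j)) i]
  exact sum_congr rfl fun j hj => by rw [mem_range] at hj; congr 1; omega

lemma dependsOn_walk (n : ℕ) : DependsOn (walk · n) (Set.Iio n) :=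
  fun _ _ h => sum_congr rfl fun i hi => h i (mem_range.mp hi)

lemma walkStaysIn_anti (s : Set ℤ) : Antitone (walkStaysIn s) :=
  fun _ _ hkl _ hx i h1 hi => hx i h1 (hi.trans hkl)

lemma dependsOn_walkStaysIn (s : Set ℤ) (k : ℕ) : DependsOn (· ∈ walkStaysIn s k) (Set.Iio k) :=
  fun x y h => by
    have hw : ∀ i ≤ k, walk x i = walk y i := fun i hi =>
      dependsOn_walk i fun j hj => h j (lt_of_lt_of_le hj hi)
    simp only [walkStaysIn, Set.mem_ofPred_eq]
    exact propext <| forall_congr' fun i => imp_congr_right fun _ =>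
      forall_congr' fun hi => by rw [hw i hi]

lemma dependsOn_nonposEndingAt (r k : ℕ) : DependsOn (· ∈ nonposEndingAt r k) (Set.Iio k) :=
  fun x y h => by
    have hw : walk x k = walk y k := dependsOn_walk k h
    have hs : (x ∈ walkStaysIn (Set.Iic 0) k) = (y ∈ walkStaysIn (Set.Iic 0) k) :=
      dependsOn_walkStaysIn _ k h
    simp only [nonposEndingAt, Set.mem_ofPred_eq, hw, hs]

lemma dependsOn_setOf_comp_mem {S : Set (ℕ → ℤ)} {n m : ℕ} {σ : ℕ → ℕ}
    (hS : DependsOn (· ∈ S) (Set.Iio n)) (hσ : Set.MapsTo σ (Set.Iio n) (Set.Iio m)) :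
    DependsOn (· ∈ {x : ℕ → ℤ | (fun i => x (σ i)) ∈ S}) (Set.Iio m) :=
  fun _ _ h => hS fun i hi => h (σ i) (hσ hi)

lemma reverse_mem_walkStaysIn_Ioi_iff (k : ℕ) :
    (fun j => x (k - 1 - j)) ∈ walkStaysIn (Set.Ioi 0) k ↔ ∀ i < k, walk x i < walk x k := by
  simp only [walkStaysIn, Set.mem_ofPred_eq, Set.mem_Ioi]
  constructor
  · intro h i hi
    have := h (k - i) (by omega) (by omega)
    rwa [walk_reverse (by omega), Nat.sub_sub_self hi.le, sub_pos] at this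
  · intro h i h1 hi
    rw [walk_reverse hi, sub_pos]
    exact h _ (by omega)

lemma shift_mem_walkStaysIn_Iic_iff (k m : ℕ) :
    (fun j => x (k + j)) ∈ walkStaysIn (Set.Iic 0) m ↔
      ∀ j, k ≤ j → j ≤ k + m → walk x j ≤ walk x k := by
  simp only [walkStaysIn, Set.mem_ofPred_eq, Set.mem_Iic]
  constructor
  · intro h j hkj hj
    obtain ⟨i, rfl⟩ := Nat.exists_eq_add_of_le hkj
    rcases i.eq_zero_or_pos with rfl | hi
    · simp
    · have := h i hi (by omega)
      rw [walk_add]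
      omega
  · intro h i h1 hi
    have := h (k + i) (by omega) (by omega)
    rw [walk_add] at this
    omega

lemma le_walk_of_one_le {m i : ℕ} (hx : ∀ j < m, 1 ≤ x j) (hi : i ≤ m) :
    (i : ℤ) ≤ walk x i := by
  calc (i : ℤ) = ∑ _j ∈ range i, (1 : ℤ) := by simp
    _ ≤ walk x i := sum_le_sum fun j hj => hx j (by rw [mem_range] at hj; omega)

lemma mem_walkStaysIn_Ioi_of_one_le {m k : ℕ} (hx : ∀ j < m, 1 ≤ x j)
    (hshift : (fun j => x (m + j)) ∈ walkStaysIn (Set.Ioi (-(m : ℤ))) k) :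
    x ∈ walkStaysIn (Set.Ioi 0) (m + k) := by
  intro i h1 hi
  rw [Set.mem_Ioi]
  rcases le_or_gt i m with him | hmi
  · have := le_walk_of_one_le hx him
    omega
  · obtain ⟨j, rfl⟩ := Nat.exists_eq_add_of_lt hmi
    have h1 := le_walk_of_one_le hx le_rfl
    have h2 : -(m : ℤ) < walk (fun j => x (m + j)) (j + 1) := hshift (j + 1) (by omega) (by omega)
    rw [add_assoc, walk_add]
    omega

end Walk

section FirstMaxTime

def IsFirstMaxTime (x : ℕ → ℤ) (n k : ℕ) : Prop :=
  k ≤ n ∧ (∀ i < k, walk x i < walk x k) ∧ ∀ j, k ≤ j → j ≤ n → walk x j ≤ walk x k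

variable {x : ℕ → ℤ} {n k l : ℕ}

lemma IsFirstMaxTime.eq (hk : IsFirstMaxTime x n k) (hl : IsFirstMaxTime x n l) : k = l := by
  by_contra hne
  rcases Nat.lt_or_gt_of_ne hne with h | h
  · exact absurd (hk.2.2 l h.le hl.1) (not_le.mpr (hl.2.1 k h))
  · exact absurd (hl.2.2 k h.le hk.1) (not_le.mpr (hk.2.1 l h))

lemma exists_isFirstMaxTime (x : ℕ → ℤ) (n : ℕ) : ∃ k, IsFirstMaxTime x n k := by
  classical
  have hmax : ∃ k, k ≤ n ∧ ∀ j ≤ n, walk x j ≤ walk x k := by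
    obtain ⟨k, hk, hmax⟩ := exists_max_image (range (n + 1)) (walk x) nonempty_range_add_one
    exact ⟨k, Nat.lt_succ_iff.mp (mem_range.mp hk),
      fun j hj => hmax j (mem_range.mpr (Nat.lt_succ_of_le hj))⟩
  obtain ⟨hkn, hk⟩ := Nat.find_spec hmax
  refine ⟨Nat.find hmax, hkn, fun i hi => ?_, fun j _ hj => hk j hj⟩
  by_contra hle
  exact Nat.find_min hmax hi ⟨by omega, fun j hj => (hk j hj).trans (not_lt.mp hle)⟩

lemma IsFirstMaxTime.sup'_eq (hk : IsFirstMaxTime x n k) :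
    (range (n + 1)).sup' nonempty_range_add_one (walk x) = walk x k := by
  refine le_antisymm (sup'_le _ _ fun j hj => ?_)
    (le_sup' _ (mem_range.mpr (Nat.lt_succ_of_le hk.1)))
  rcases lt_or_ge j k with h | h
  · exact (hk.2.1 j h).le
  · exact hk.2.2 j h (Nat.lt_succ_iff.mp (mem_range.mp hj))

lemma sup'_sub_walk_eq_iff (x : ℕ → ℤ) (n r : ℕ) :
    (range (n + 1)).sup' nonempty_range_add_one (walk x) - walk x n = r ↔
      ∃ k, IsFirstMaxTime x n k ∧ walk x n = walk x k - r := by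
  constructor
  · intro h
    obtain ⟨k, hk⟩ := exists_isFirstMaxTime x n
    rw [hk.sup'_eq] at h
    exact ⟨k, hk, by omega⟩
  · rintro ⟨k, hk, hend⟩
    rw [hk.sup'_eq]
    omega

lemma isFirstMaxTime_and_iff (hkn : k ≤ n) (r : ℕ) :
    IsFirstMaxTime x n k ∧ walk x n = walk x k - r ↔
      (fun j => x (k - 1 - j)) ∈ walkStaysIn (Set.Ioi 0) k ∧
        (fun j => x (k + j)) ∈ nonposEndingAt r (n - k) := by
  have hend : walk (fun j => x (k + j)) (n - k) = walk x n - walk x k := by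
    rw [eq_sub_iff_add_eq', ← walk_add, Nat.add_sub_cancel' hkn]
  rw [nonposEndingAt, Set.mem_ofPred_eq, reverse_mem_walkStaysIn_Ioi_iff,
    shift_mem_walkStaysIn_Iic_iff, Nat.add_sub_cancel' hkn, hend, IsFirstMaxTime]
  constructor
  · rintro ⟨⟨-, hA, hB⟩, he⟩
    exact ⟨hA, by omega, hB⟩
  · rintro ⟨hA, he, hB⟩
    exact ⟨⟨hkn, hA, hB⟩, by omega⟩

end FirstMaxTime

section PathEvents

/-- Every subset of the countable type `Fin n → ℤ` is measurable, so events that depend on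
finitely many steps need no measurability bookkeeping. -/
lemma preimage_eq_preimage_tuple {Y : ℕ → Ω → ℤ} {S : Set (ℕ → ℤ)} {n : ℕ}
    (hS : DependsOn (· ∈ S) (Set.Iio n)) :
    (fun ω i => Y i ω) ⁻¹' S =
      (fun ω (i : Fin n) => Y i ω) ⁻¹' {v | extend Fin.val v 0 ∈ S} := by
  ext ω
  exact Iff.of_eq <| hS fun i hi =>
    (Fin.val_injective.extend_apply (fun j : Fin n => Y j ω) 0 ⟨i, hi⟩).symm

variable [MeasurableSpace Ω] {P : Measure Ω} {X : ℕ → Ω → ℤ}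
  (hXmeas : ∀ i, Measurable (X i)) (hXindep : iIndepFun X P)
  (hXident : ∀ i, IdentDistrib (X i) (X 0) P P)

include hXmeas in
lemma measurableSet_preimage_of_dependsOn {S : Set (ℕ → ℤ)} {n : ℕ}
    (hS : DependsOn (· ∈ S) (Set.Iio n)) : MeasurableSet ((fun ω i => X i ω) ⁻¹' S) := by
  rw [preimage_eq_preimage_tuple hS]
  exact measurable_pi_lambda (fun ω (i : Fin n) => X i ω) (fun i => hXmeas i) .of_discrete

include hXmeas hXindep hXident in
lemma map_tuple_eq_pi {n : ℕ} {σ : Fin n → ℕ} (hσ : σ.Injective) :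
    P.map (fun ω i => X (σ i) ω) = Measure.pi fun _ => P.map (X 0) := by
  rw [(hXindep.precomp hσ).map_fun_eq_pi_map fun i => (hXmeas _).aemeasurable]
  simp_rw [(hXident _).map_eq]

include hXmeas hXindep hXident in
lemma measure_preimage_comp_eq {n : ℕ} {σ : ℕ → ℕ} (hσ : Set.InjOn σ (Set.Iio n))
    {S : Set (ℕ → ℤ)} (hS : DependsOn (· ∈ S) (Set.Iio n)) :
    P ((fun ω i => X (σ i) ω) ⁻¹' S) = P ((fun ω i => X i ω) ⁻¹' S) := by
  have hσ' : (fun i : Fin n => σ i).Injective := fun i j h =>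
    Fin.val_injective (hσ i.isLt j.isLt h)
  rw [preimage_eq_preimage_tuple (Y := fun i => X (σ i)) hS, preimage_eq_preimage_tuple hS,
    ← Measure.map_apply (measurable_pi_lambda _ fun i => hXmeas _) .of_discrete,
    ← Measure.map_apply (measurable_pi_lambda _ fun i => hXmeas _) .of_discrete,
    map_tuple_eq_pi hXmeas hXindep hXident hσ',
    map_tuple_eq_pi hXmeas hXindep hXident (σ := Fin.val) Fin.val_injective]

include hXmeas hXindep in
lemma indepFun_tuple_shift (k m : ℕ) :
    IndepFun (fun ω (i : Fin k) => X i ω) (fun ω (i : Fin m) => X (k + i) ω) P := by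
  have hdisj : Disjoint (range k) (Ico k (k + m)) := by
    simp only [disjoint_left, mem_range, mem_Ico]
    omega
  refine (hXindep.indepFun_finset _ _ hdisj hXmeas).comp
    (φ := fun u (i : Fin k) => u ⟨i, mem_range.mpr i.isLt⟩)
    (ψ := fun u (i : Fin m) => u ⟨k + i, mem_Ico.mpr ⟨by omega, by omega⟩⟩) ?_ ?_
  · exact measurable_pi_lambda _ fun i => measurable_pi_apply _
  · exact measurable_pi_lambda _ fun i => measurable_pi_apply _

include hXmeas hXindep hXident in
lemma measure_inter_preimage_shift {k m : ℕ} {S S' : Set (ℕ → ℤ)}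
    (hS : DependsOn (· ∈ S) (Set.Iio k)) (hS' : DependsOn (· ∈ S') (Set.Iio m)) :
    P ((fun ω i => X i ω) ⁻¹' S ∩ (fun ω i => X (k + i) ω) ⁻¹' S') =
      P ((fun ω i => X i ω) ⁻¹' S) * P ((fun ω i => X i ω) ⁻¹' S') := by
  rw [← measure_preimage_comp_eq hXmeas hXindep hXident (σ := (k + ·))
      (fun i _ j _ h => Nat.add_left_cancel h) hS',
    preimage_eq_preimage_tuple hS, preimage_eq_preimage_tuple (Y := fun i => X (k + i)) hS']
  exact (indepFun_tuple_shift hXmeas hXindep k m).measure_inter_preimage_eq_mul _ _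
    .of_discrete .of_discrete

end PathEvents

lemma tsum_measure_inter_eq_natCast [MeasurableSpace Ω] {μ : Measure Ω} {E : Set Ω}
    (hE : MeasurableSet E) {f : Ω → ℤ} (hf : Measurable f) (hpos : ∀ ω ∈ E, 0 ≤ f ω) :
    ∑' r : ℕ, μ (E ∩ {ω | f ω = r}) = μ E := by
  have hdisj : Pairwise (Disjoint on fun r : ℕ => E ∩ {ω | f ω = r}) := fun r s hrs =>
    Set.disjoint_left.mpr fun ω h1 h2 => hrs (by exact_mod_cast h1.2.symm.trans h2.2)
  rw [← measure_iUnion hdisj fun r => hE.inter (hf (measurableSet_singleton (r : ℤ)))]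
  congr 1
  ext ω
  simp only [Set.mem_iUnion, Set.mem_inter_iff, Set.mem_ofPred_eq]
  exact ⟨fun ⟨_, hω, _⟩ => hω,
    fun hω => ⟨(f ω).toNat, hω, (Int.toNat_of_nonneg (hpos ω hω)).symm⟩⟩

section Decomposition

variable [MeasurableSpace Ω] {P : Measure Ω} {X : ℕ → Ω → ℤ}
  (hXmeas : ∀ i, Measurable (X i)) (hXindep : iIndepFun X P)
  (hXident : ∀ i, IdentDistrib (X i) (X 0) P P)

include hXmeas hXindep hXident in
lemma measure_max_sub_eq (r n : ℕ) :
    P {ω | Mwalk X n ω - Swalk X n ω = r} =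
      ∑ k ∈ range (n + 1), P ((fun ω i => X i ω) ⁻¹' walkStaysIn (Set.Ioi 0) k) *
        P ((fun ω i => X i ω) ⁻¹' nonposEndingAt r (n - k)) := by
  set F : ℕ → Set Ω := fun k =>
    (fun ω i => X i ω) ⁻¹' {x | (fun j => x (k - 1 - j)) ∈ walkStaysIn (Set.Ioi 0) k} ∩
      (fun ω i => X (k + i) ω) ⁻¹' nonposEndingAt r (n - k)
  have hrev (k : ℕ) : DependsOn (· ∈ {x : ℕ → ℤ | (fun j => x (k - 1 - j)) ∈
      walkStaysIn (Set.Ioi 0) k}) (Set.Iio k) :=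
    dependsOn_setOf_comp_mem (dependsOn_walkStaysIn _ k) fun i hi => by
      simp only [Set.mem_Iio] at hi ⊢; omega
  have hmemF (ω : Ω) (k : ℕ) : (k ∈ range (n + 1) ∧ ω ∈ F k) ↔
      IsFirstMaxTime (X · ω) n k ∧ walk (X · ω) n = walk (X · ω) k - r := by
    rw [mem_range, Nat.lt_succ_iff]
    constructor
    · rintro ⟨hkn, hF⟩
      exact (isFirstMaxTime_and_iff hkn r).mpr hF
    · intro h
      exact ⟨h.1.1, (isFirstMaxTime_and_iff h.1.1 r).mp h⟩
  have hunion : {ω | Mwalk X n ω - Swalk X n ω = r} = ⋃ k ∈ range (n + 1), F k := by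
    ext ω
    simp only [Set.mem_iUnion, exists_prop, hmemF]
    exact sup'_sub_walk_eq_iff (X · ω) n r
  have hdisj : (range (n + 1) : Set ℕ).PairwiseDisjoint F := fun k hk l hl hkl =>
    Set.disjoint_left.mpr fun ω hωk hωl =>
      hkl (((hmemF ω k).mp ⟨hk, hωk⟩).1.eq ((hmemF ω l).mp ⟨hl, hωl⟩).1)
  rw [hunion, measure_biUnion_finset hdisj fun k _ =>
    (measurableSet_preimage_of_dependsOn hXmeas (hrev k)).inter
      (measurableSet_preimage_of_dependsOn (fun i => hXmeas (k + i))
        (dependsOn_nonposEndingAt r (n - k)))]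
  refine sum_congr rfl fun k _ => ?_
  rw [measure_inter_preimage_shift hXmeas hXindep hXident (hrev k)
    (dependsOn_nonposEndingAt r (n - k))]
  congr 1
  exact measure_preimage_comp_eq hXmeas hXindep hXident
    (fun i hi j hj h => by simp only [Set.mem_Iio] at hi hj; omega) (dependsOn_walkStaysIn _ k)

include hXmeas in
lemma measurable_swalk (n : ℕ) : Measurable (Swalk X n) :=
  Finset.measurable_sum _ fun i _ => hXmeas i

include hXmeas in
lemma tsum_measure_max_sub_eq_one [IsProbabilityMeasure P] (n : ℕ) :
    ∑' r : ℕ, P {ω | Mwalk X n ω - Swalk X n ω = r} = 1 := by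
  have h := tsum_measure_inter_eq_natCast (μ := P) MeasurableSet.univ
    ((Finset.measurable_range_sup'' fun k _ => measurable_swalk hXmeas k).sub
      (measurable_swalk hXmeas n))
    fun ω _ => sub_nonneg.mpr (le_sup' (fun k => Swalk X k ω) (self_mem_range_succ n))
  simp only [Set.univ_inter, measure_univ] at h
  exact h

include hXmeas in
lemma tsum_measure_nonposEndingAt (j : ℕ) :
    ∑' r : ℕ, P ((fun ω i => X i ω) ⁻¹' nonposEndingAt r j) =
      P ((fun ω i => X i ω) ⁻¹' walkStaysIn (Set.Iic 0) j) := by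
  have hpos (ω) (hω : ω ∈ (fun ω i => X i ω) ⁻¹' walkStaysIn (Set.Iic 0) j) :
      0 ≤ -Swalk X j ω := by
    rcases j.eq_zero_or_pos with rfl | hj
    · simp [Swalk]
    · exact neg_nonneg.mpr (hω j hj le_rfl)
  rw [← tsum_measure_inter_eq_natCast (measurableSet_preimage_of_dependsOn hXmeas
    (dependsOn_walkStaysIn _ j)) (measurable_swalk hXmeas j).neg hpos]
  congr! 3 with r
  ext ω
  simp only [nonposEndingAt, Set.mem_preimage, Set.mem_ofPred_eq, Set.mem_inter_iff,
    Pi.neg_apply, neg_eq_iff_eq_neg]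
  exact and_comm

include hXmeas hXindep hXident in
lemma sum_measure_mul_measure_eq_one [IsProbabilityMeasure P] (n : ℕ) :
    ∑ k ∈ range (n + 1), P ((fun ω i => X i ω) ⁻¹' walkStaysIn (Set.Ioi 0) k) *
      P ((fun ω i => X i ω) ⁻¹' walkStaysIn (Set.Iic 0) (n - k)) = 1 := by
  simp_rw [← tsum_measure_nonposEndingAt hXmeas, ← ENNReal.tsum_mul_left]
  rw [← Summable.tsum_finsetSum fun _ _ => ENNReal.summable]
  simp_rw [← measure_max_sub_eq hXmeas hXindep hXident]
  exact tsum_measure_max_sub_eq_one hXmeas n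

end Decomposition

section Positivity

variable [MeasurableSpace Ω] {P : Measure Ω}
  {X : ℕ → Ω → ℤ} (hXmeas : ∀ i, Measurable (X i)) (hXindep : iIndepFun X P)
  (hXident : ∀ i, IdentDistrib (X i) (X 0) P P)

lemma measure_one_le_ne_zero {Y : Ω → ℤ} (hY : 0 < ∫ ω, (Y ω : ℝ) ∂P) :
    P {ω | 1 ≤ Y ω} ≠ 0 := by
  intro h0
  have hle : ∀ᵐ ω ∂P, (Y ω : ℝ) ≤ 0 := by
    filter_upwards [measure_eq_zero_iff_ae_notMem.mp h0] with ω hω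
    have : Y ω ≤ 0 := by simp only [not_le] at hω; omega
    exact_mod_cast this
  exact (integral_nonpos_of_ae hle).not_gt hY

include hXindep hXident in
lemma measure_preimage_one_le (m : ℕ) :
    P ((fun ω i => X i ω) ⁻¹' {x | ∀ i < m, 1 ≤ x i}) = P {ω | 1 ≤ X 0 ω} ^ m := by
  have hset : (fun ω i => X i ω) ⁻¹' {x | ∀ i < m, 1 ≤ x i} =
      ⋂ i ∈ range m, X i ⁻¹' Set.Ici 1 := by
    ext ω
    simp
  have hident (i : ℕ) : P (X i ⁻¹' Set.Ici 1) = P {ω | 1 ≤ X 0 ω} :=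
    (hXident i).measure_mem_eq measurableSet_Ici
  rw [hset, hXindep.measure_inter_preimage_eq_mul _ fun _ _ => measurableSet_Ici,
    prod_congr rfl fun i _ => hident i, prod_const, card_range]

include hXindep hXident in
lemma ae_tendsto_swalk_atTop (hXint : Integrable (fun ω => (X 0 ω : ℝ)) P)
    (hpos : 0 < ∫ ω, (X 0 ω : ℝ) ∂P) :
    ∀ᵐ ω ∂P, Tendsto (fun n => Swalk X n ω) atTop atTop := by
  have hcast : Measurable (fun z : ℤ => (z : ℝ)) := measurable_from_top
  filter_upwards [strong_law_ae (fun i ω => (X i ω : ℝ)) hXint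
    (fun i j hij => (hXindep.comp _ fun _ => hcast).indepFun hij)
    fun i => (hXident i).comp hcast] with ω hω
  rw [← tendsto_intCast_atTop_iff (R := ℝ)]
  refine (tendsto_natCast_atTop_atTop.atTop_mul_pos hpos hω).congr' ?_
  filter_upwards [eventually_ne_atTop 0] with n hn
  simp [Swalk, smul_eq_mul, mul_inv_cancel_left₀ (Nat.cast_ne_zero.mpr hn : (n : ℝ) ≠ 0)]

include hXindep hXident in
lemma exists_measure_lt_walk_ne_zero [IsProbabilityMeasure P]
    (hXint : Integrable (fun ω => (X 0 ω : ℝ)) P)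
    (hpos : 0 < ∫ ω, (X 0 ω : ℝ) ∂P) :
    ∃ m : ℕ, P ((fun ω i => X i ω) ⁻¹' {x | ∀ i, -(m : ℤ) < walk x i}) ≠ 0 := by
  by_contra! h
  have hnull := measure_iUnion_null h
  have hbdd : ∀ᵐ ω ∂P, ω ∈ ⋃ m : ℕ, (fun ω i => X i ω) ⁻¹' {x | ∀ i, -(m : ℤ) < walk x i} := by
    filter_upwards [ae_tendsto_swalk_atTop hXindep hXident hXint hpos] with ω hω
    obtain ⟨b, hb⟩ := bddBelow_range_of_tendsto_atTop_atTop hω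
    refine Set.mem_iUnion.mpr ⟨(-b + 1).toNat, fun i => ?_⟩
    have : b ≤ Swalk X i ω := hb ⟨i, rfl⟩
    show _ < Swalk X i ω
    omega
  obtain ⟨ω, hω, hω'⟩ := (hbdd.and (measure_eq_zero_iff_ae_notMem.mp hnull)).exists
  exact hω' hω

include hXmeas hXindep hXident in
lemma exists_ne_zero_le_measure_walkStaysIn_Ioi [IsProbabilityMeasure P]
    (hXint : Integrable (fun ω => (X 0 ω : ℝ)) P)
    (hpos : 0 < ∫ ω, (X 0 ω : ℝ) ∂P) :
    ∃ c ≠ 0, ∀ k, c ≤ P ((fun ω i => X i ω) ⁻¹' walkStaysIn (Set.Ioi 0) k) := by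
  obtain ⟨m, hm⟩ := exists_measure_lt_walk_ne_zero hXindep hXident hXint hpos
  have hsteps : DependsOn (· ∈ {x : ℕ → ℤ | ∀ i < m, 1 ≤ x i}) (Set.Iio m) := fun x y h => by
    simp only [Set.mem_ofPred_eq]
    exact propext <| forall₂_congr fun i hi => by rw [h i hi]
  refine ⟨P {ω | 1 ≤ X 0 ω} ^ m * P ((fun ω i => X i ω) ⁻¹' {x | ∀ i, -(m : ℤ) < walk x i}),
    mul_ne_zero (pow_ne_zero _ (measure_one_le_ne_zero hpos)) hm, fun k => ?_⟩
  have hbound : {x : ℕ → ℤ | ∀ i, -(m : ℤ) < walk x i} ⊆ walkStaysIn (Set.Ioi (-(m : ℤ))) k :=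
    fun x hx i _ _ => hx i
  calc _ ≤ P {ω | 1 ≤ X 0 ω} ^ m *
        P ((fun ω i => X i ω) ⁻¹' walkStaysIn (Set.Ioi (-(m : ℤ))) k) :=
        mul_le_mul_right (measure_mono (Set.preimage_mono hbound)) _
    _ = P ((fun ω i => X i ω) ⁻¹' {x | ∀ i < m, 1 ≤ x i} ∩
          (fun ω i => X (m + i) ω) ⁻¹' walkStaysIn (Set.Ioi (-(m : ℤ))) k) := by
        rw [measure_inter_preimage_shift hXmeas hXindep hXident hsteps
          (dependsOn_walkStaysIn _ k), measure_preimage_one_le hXindep hXident]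
    _ ≤ P ((fun ω i => X i ω) ⁻¹' walkStaysIn (Set.Ioi 0) (m + k)) :=
        measure_mono fun ω hω => mem_walkStaysIn_Ioi_of_one_le hω.1 hω.2
    _ ≤ _ := measure_mono fun ω hω => walkStaysIn_anti _ (Nat.le_add_left k m) hω

end Positivity

lemma tendsto_sum_range_mul_sub {g v : ℕ → ℝ} {q : ℝ} (hg : Tendsto g atTop (𝓝 q))
    (hv : Summable v) :
    Tendsto (fun n => ∑ k ∈ range (n + 1), g k * v (n - k)) atTop (𝓝 (q * ∑' j, v j)) := by
  obtain ⟨C, hC⟩ := hg.abs.bddAbove_range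
  have hgC (k : ℕ) : |g k| ≤ C := hC ⟨k, rfl⟩
  have hsum (n : ℕ) : ∑ k ∈ range (n + 1), g k * v (n - k) =
      ∑' j, if j ≤ n then g (n - j) * v j else 0 := by
    rw [tsum_eq_sum (s := range (n + 1)) fun j hj => if_neg (by simpa using hj),
      ← sum_range_reflect]
    refine sum_congr rfl fun j hj => ?_
    rw [mem_range] at hj
    rw [if_pos (by omega), Nat.add_sub_cancel, Nat.sub_sub_self (by omega)]
  simp_rw [hsum, ← tsum_mul_left]
  refine tendsto_tsum_of_dominated_convergence (hv.abs.mul_left C) (fun j => ?_)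
    (Eventually.of_forall fun n j => ?_)
  · refine (((hg.comp (tendsto_sub_atTop_nat j)).mul_const (v j)).congr' ?_)
    filter_upwards [eventually_ge_atTop j] with n hn
    simp [hn]
  · split_ifs
    · rw [Real.norm_eq_abs, abs_mul]
      exact mul_le_mul_of_nonneg_right (hgC _) (abs_nonneg _)
    · rw [norm_zero]
      exact mul_nonneg ((abs_nonneg _).trans (hgC 0)) (abs_nonneg _)

lemma summable_and_mul_tsum_eq_one {g t : ℕ → ℝ} {q : ℝ} (hq : 0 < q)
    (hg : Tendsto g atTop (𝓝 q)) (hqg : ∀ k, q ≤ g k) (ht : ∀ j, 0 ≤ t j)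
    (hone : ∀ n, ∑ k ∈ range (n + 1), g k * t (n - k) = 1) :
    Summable t ∧ q * ∑' j, t j = 1 := by
  have hsummable : Summable t := by
    refine summable_of_sum_range_le ht (c := q⁻¹) fun n => ?_
    calc ∑ j ∈ range n, t j ≤ ∑ j ∈ range (n + 1), t j :=
          sum_le_sum_of_subset_of_nonneg (range_subset_range.mpr n.le_succ) fun j _ _ => ht j
      _ = ∑ k ∈ range (n + 1), t (n - k) := by
          simpa using (sum_range_reflect t (n + 1)).symm
      _ ≤ ∑ k ∈ range (n + 1), q⁻¹ * (g k * t (n - k)) := by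
          gcongr with k
          rw [← mul_assoc]
          exact le_mul_of_one_le_left (ht _) ((one_le_inv_mul₀ hq).mpr (hqg k))
      _ = q⁻¹ := by rw [← mul_sum, hone, mul_one]
  refine ⟨hsummable, tendsto_nhds_unique (tendsto_sum_range_mul_sub hg hsummable) ?_⟩
  simp_rw [hone]
  exact tendsto_const_nhds

lemma toReal_sum_measure_mul {ι : Type*} [MeasurableSpace Ω] {P : Measure Ω} [IsFiniteMeasure P]
    (s : Finset ι) (E F : ι → Set Ω) :
    (∑ k ∈ s, P (E k) * P (F k)).toReal = ∑ k ∈ s, pr P (E k) * pr P (F k) := by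
  rw [ENNReal.toReal_sum fun _ _ => ENNReal.mul_ne_top (measure_ne_top _ _) (measure_ne_top _ _)]
  simp only [ENNReal.toReal_mul, pr]

section Probabilities

variable [MeasurableSpace Ω] {P : Measure Ω} [IsProbabilityMeasure P]
  {X : ℕ → Ω → ℤ} (hXmeas : ∀ i, Measurable (X i)) (hXindep : iIndepFun X P)
  (hXident : ∀ i, IdentDistrib (X i) (X 0) P P)

include hXmeas hXindep hXident in
lemma pr_max_sub_eq (r n : ℕ) :
    pr P {ω | Mwalk X n ω - Swalk X n ω = r} =
      ∑ k ∈ range (n + 1), pr P ((fun ω i => X i ω) ⁻¹' walkStaysIn (Set.Ioi 0) k) *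
        pr P ((fun ω i => X i ω) ⁻¹' nonposEndingAt r (n - k)) := by
  rw [pr, measure_max_sub_eq hXmeas hXindep hXident, toReal_sum_measure_mul]

include hXmeas hXindep hXident in
lemma sum_pr_mul_pr_eq_one (n : ℕ) :
    ∑ k ∈ range (n + 1), pr P ((fun ω i => X i ω) ⁻¹' walkStaysIn (Set.Ioi 0) k) *
      pr P ((fun ω i => X i ω) ⁻¹' walkStaysIn (Set.Iic 0) (n - k)) = 1 := by
  rw [← toReal_sum_measure_mul, sum_measure_mul_measure_eq_one hXmeas hXindep hXident,
    ENNReal.toReal_one]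

include hXmeas hXindep hXident in
lemma exists_tendsto_pr_walkStaysIn_Ioi (hXint : Integrable (fun ω => (X 0 ω : ℝ)) P)
    (hpos : 0 < ∫ ω, (X 0 ω : ℝ) ∂P) :
    ∃ q > 0, Tendsto (fun k => pr P ((fun ω i => X i ω) ⁻¹' walkStaysIn (Set.Ioi 0) k)) atTop
      (𝓝 q) ∧ ∀ k, q ≤ pr P ((fun ω i => X i ω) ⁻¹' walkStaysIn (Set.Ioi 0) k) := by
  obtain ⟨c, hc0, hc⟩ :=
    exists_ne_zero_le_measure_walkStaysIn_Ioi hXmeas hXindep hXident hXint hpos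
  set g := fun k => pr P ((fun ω i => X i ω) ⁻¹' walkStaysIn (Set.Ioi 0) k)
  have hanti : Antitone g := fun k l hkl =>
    ENNReal.toReal_mono (measure_ne_top _ _) (measure_mono fun ω hω => walkStaysIn_anti _ hkl hω)
  have hcg (k : ℕ) : c.toReal ≤ g k := ENNReal.toReal_mono (measure_ne_top _ _) (hc k)
  have hbdd : BddBelow (Set.range g) := ⟨c.toReal, Set.forall_mem_range.mpr hcg⟩
  have hctop : c ≠ ⊤ := ne_top_of_le_ne_top (measure_ne_top _ _) (hc 0)
  refine ⟨⨅ k, g k, (ENNReal.toReal_pos hc0 hctop).trans_le (le_ciInf hcg),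
    tendsto_atTop_ciInf hanti hbdd, fun k => ciInf_le hbdd k⟩

end Probabilities

theorem limit_distribution_of_max_minus_endpoint_general
    {Ω : Type*} [MeasurableSpace Ω] (P : Measure Ω) [IsProbabilityMeasure P]
    (X : ℕ → Ω → ℤ)
    -- `X` are i.i.d. under `P`
    (hXmeas : ∀ i, Measurable (X i))
    (hXindep : iIndepFun X P)
    (hXident : ∀ i, IdentDistrib (X i) (X 0) P P)
    -- positive drift `E X₁ = a > 0`
    (a : ℝ) (ha : 0 < a)
    (hXint : Integrable (fun ω => (X 0 ω : ℝ)) P)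
    (hmean : ∫ ω, (X 0 ω : ℝ) ∂P = a)
    (r : ℕ) :
    Tendsto (fun n : ℕ => pr P {ω | Mwalk X n ω - Swalk X n ω = (r : ℤ)})
      atTop
      (nhds ((∑' j : ℕ, pr P {ω | Swalk X j ω = -(r : ℤ) ∧
            ∀ i : ℕ, 1 ≤ i → i ≤ j → Swalk X i ω ≤ 0})
        / ∑' n : ℕ, pr P {ω | ∀ j : ℕ, 1 ≤ j → j ≤ n → Swalk X j ω ≤ 0})) := by
  set T : ℕ → ℝ := fun n => pr P ((fun ω i => X i ω) ⁻¹' walkStaysIn (Set.Iic 0) n)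
  set V : ℕ → ℝ := fun j => pr P ((fun ω i => X i ω) ⁻¹' nonposEndingAt r j)
  change Tendsto _ atTop (𝓝 ((∑' j, V j) / ∑' n, T n))
  obtain ⟨q, hq, hgq, hqg⟩ :=
    exists_tendsto_pr_walkStaysIn_Ioi hXmeas hXindep hXident hXint (hmean ▸ ha)
  obtain ⟨hT, hqT⟩ := summable_and_mul_tsum_eq_one (t := T) hq hgq hqg
    (fun _ => ENNReal.toReal_nonneg) (sum_pr_mul_pr_eq_one hXmeas hXindep hXident)
  have hV : Summable V := hT.of_nonneg_of_le (fun _ => ENNReal.toReal_nonneg) fun j =>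
    ENNReal.toReal_mono (measure_ne_top _ _) (measure_mono fun ω hω => hω.2)
  rw [eq_inv_of_mul_eq_one_right hqT, div_inv_eq_mul, mul_comm]
  simp_rw [pr_max_sub_eq hXmeas hXindep hXident]
  exact tendsto_sum_range_mul_sub hgq hV

/-- `P(M_n - S_n = r) → V(r)/E τ₊`, where `E τ₊ = Σ_n P(τ₊ > n)`. -/
theorem limit_distribution_of_max_minus_endpoint
    {Ω : Type*} [MeasurableSpace Ω] (P : Measure Ω) [IsProbabilityMeasure P]
    (X : ℕ → Ω → ℤ)
    -- `X` are i.i.d. under `P`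
    (hXmeas : ∀ i, Measurable (X i))
    (hXindep : iIndepFun X P)
    (hXident : ∀ i, IdentDistrib (X i) (X 0) P P)
    -- positive drift `E X₁ = a > 0`
    (a : ℝ) (ha : 0 < a)
    (hXint : Integrable (fun ω => (X 0 ω : ℝ)) P)
    (hmean : ∫ ω, (X 0 ω : ℝ) ∂P = a)
    -- variance `σ² ∈ (0,∞)`
    (σ2 : ℝ) (hσ2pos : 0 < σ2)
    (hXsq : Integrable (fun ω => ((X 0 ω : ℝ) - a) ^ 2) P)
    (hσ2 : σ2 = ∫ ω, ((X 0 ω : ℝ) - a) ^ 2 ∂P)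
    (r : ℕ) :
    Tendsto (fun n : ℕ => pr P {ω | Mwalk X n ω - Swalk X n ω = (r : ℤ)})
      atTop
      (nhds ((∑' j : ℕ, pr P {ω | Swalk X j ω = -(r : ℤ) ∧
            ∀ i : ℕ, 1 ≤ i → i ≤ j → Swalk X i ω ≤ 0})
        / ∑' n : ℕ, pr P {ω | ∀ j : ℕ, 1 ≤ j → j ≤ n → Swalk X j ω ≤ 0})) :=
  limit_distribution_of_max_minus_endpoint_general P X hXmeas hXindep hXident a ha hXint hmean r
end

section
/- One has P(τ = ∞) · E[τ₊] = 1. More generally, the generating-function duality identity (1 − E[z^{τ₊}])(1 − E[z^{τ}; τ < ∞]) = 1 − z holds for all z ∈ [0, 1), and P(τ = ∞)·E[τ₊] = 1 follows by dividing by 1 − z and letting z → 1. -/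
/-!
Reversing the first `n` increments of an i.i.d. walk preserves its law and turns `{τ₊ > n}` into
`{S_n = min_{k ≤ n} S_k}`. Splitting this event (for `n + 1`) at the first time `τ` at which
`S ≤ 0`, and using the independence of past and future, gives the renewal equation
`P(τ₊ > n + 1) = Σ_{m ≤ n} P(τ = m + 1) P(τ₊ > n - m)`, i.e. `Q(z) = 1 + E[z^τ; τ < ∞] Q(z)` for
`Q(z) = Σ z^n P(τ₊ > n)`. Since `1 - E z^{τ₊} = (1 - z) Q(z)`, this is the duality identity.

For `P(τ = ∞) E τ₊ = 1`: the events "`n` is the last time at which the walk attains its overall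
minimum" are disjoint, have probability `P(τ₊ > n) P(τ = ∞)` by the same reversal and
independence, and cover almost all of `Ω`, since `S_n → ∞` a.s. by the strong law of large numbers.
-/

open MeasureTheory ProbabilityTheory Filter Real

variable {Ω : Type*}

open Function

namespace RandomWalk

section Walk

variable {X : ℕ → Ω → ℤ} {ω : Ω}

@[simp] theorem Swalk_zero : Swalk X 0 ω = 0 := Finset.sum_range_zero _

theorem Swalk_shift (k j : ℕ) :
    Swalk (fun i => X (k + i)) j ω = Swalk X (k + j) ω - Swalk X k ω := by
  simp only [Swalk, Finset.sum_range_add, add_sub_cancel_left]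

def reflectBelow (n i : ℕ) : ℕ := if i < n then n - 1 - i else i

theorem reflectBelow_injective (n : ℕ) : (reflectBelow n).Injective := by
  intro i j h
  simp only [reflectBelow] at h
  split_ifs at h <;> omega

theorem Swalk_reflectBelow {n j : ℕ} (hj : j ≤ n) :
    Swalk (fun i => X (reflectBelow n i)) j ω = Swalk X n ω - Swalk X (n - j) ω := by
  obtain ⟨k, rfl⟩ := Nat.exists_eq_add_of_le' hj
  rw [Nat.add_sub_cancel, ← Swalk_shift, Swalk, Swalk, ← Finset.sum_range_reflect]
  refine Finset.sum_congr rfl fun i hi => ?_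
  have hi := Finset.mem_range.mp hi
  rw [reflectBelow, if_pos (by omega)]
  congr 1
  omega

end Walk

theorem exists_last_argmin_of_eventually_gt {α : Type*} [LinearOrder α] {s : ℕ → α}
    (h : ∀ᶠ n in atTop, s 0 < s n) :
    ∃ k, (∀ i < k, s k ≤ s i) ∧ ∀ i, k < i → s k < s i := by
  obtain ⟨N, hN⟩ := eventually_atTop.mp h
  obtain ⟨i₀, hi₀, hmin⟩ := (Finset.range (N + 1)).exists_min_image s ⟨0, by simp⟩
  classical
  set k := Nat.findGreatest (fun i => ∀ j ≤ N, s i ≤ s j) N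
  have hk : ∀ j ≤ N, s k ≤ s j :=
    Nat.findGreatest_spec (P := fun i => ∀ j ≤ N, s i ≤ s j) (Finset.mem_range_succ_iff.mp hi₀)
      fun j hj => hmin j (Finset.mem_range_succ_iff.mpr hj)
  have hkN : k ≤ N := Nat.findGreatest_le N
  refine ⟨k, fun i hi => hk i (by omega), fun i hi => ?_⟩
  rcases Nat.lt_or_ge N i with hNi | hiN
  · exact (hk 0 (Nat.zero_le N)).trans_lt (hN i hNi.le)
  · have := Nat.findGreatest_is_greatest hi hiN
    push Not at this
    obtain ⟨j, hj, hji⟩ := this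
    exact (hk j hj).trans_lt hji

section Events

variable (X : ℕ → Ω → ℤ)

/-! In the paper's notation `nonposUntil X n = {τ₊ > n}`, `firstPosAt X n = {τ₊ = n + 1}`,
`firstNonposAt X n = {τ = n + 1}` and `posForever X = {τ = ∞}`; `lastMinAt X n` is the event that
`n` is the last time at which the walk attains its overall minimum. -/

def nonposUntil (n : ℕ) : Set Ω := {ω | ∀ j, 1 ≤ j → j ≤ n → Swalk X j ω ≤ 0}

def firstPosAt (n : ℕ) : Set Ω :=
  {ω | (∀ j, 1 ≤ j → j ≤ n → Swalk X j ω ≤ 0) ∧ 0 < Swalk X (n + 1) ω}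

def firstNonposAt (n : ℕ) : Set Ω :=
  {ω | (∀ j, 1 ≤ j → j ≤ n → 0 < Swalk X j ω) ∧ Swalk X (n + 1) ω ≤ 0}

def posForever : Set Ω := {ω | ∀ j, 1 ≤ j → 0 < Swalk X j ω}

def runningMinAt (n : ℕ) : Set Ω := {ω | ∀ k < n, Swalk X n ω ≤ Swalk X k ω}

def lastMinAt (n : ℕ) : Set Ω := runningMinAt X n ∩ posForever (fun i => X (n + i))

variable {X}

theorem nonposUntil_succ (n : ℕ) :
    nonposUntil X (n + 1) = nonposUntil X n ∩ {ω | Swalk X (n + 1) ω ≤ 0} := by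
  ext ω
  simp only [nonposUntil, Set.mem_ofPred_eq, Set.mem_inter_iff]
  refine ⟨fun h => ⟨fun j hj hjn => h j hj (by omega), h _ (by omega) le_rfl⟩,
    fun ⟨h, hn⟩ j hj hjn => ?_⟩
  rcases Nat.lt_or_ge j (n + 1) with hlt | hge
  · exact h j hj (by omega)
  · rwa [show j = n + 1 by omega]

theorem firstPosAt_eq_diff (n : ℕ) :
    firstPosAt X n = nonposUntil X n \ {ω | Swalk X (n + 1) ω ≤ 0} := by
  ext ω
  simp [firstPosAt, nonposUntil]

theorem pairwise_disjoint_firstNonposAt : Pairwise (Disjoint on firstNonposAt X) := by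
  refine (pairwise_disjoint_on _).mpr fun m m' hlt => ?_
  refine Set.disjoint_left.mpr fun ω hm hm' => ?_
  exact (hm'.1 (m + 1) (by omega) hlt).not_ge hm.2

theorem runningMinAt_eq_nonposUntil_reflectBelow (n : ℕ) :
    runningMinAt X n = nonposUntil (fun i => X (reflectBelow n i)) n := by
  ext ω
  simp only [runningMinAt, nonposUntil, Set.mem_ofPred_eq]
  refine ⟨fun h j hj hjn => ?_, fun h k hk => ?_⟩
  · rw [Swalk_reflectBelow hjn, sub_nonpos]
    exact h _ (by omega)
  · have := h (n - k) (by omega) (by omega)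
    rwa [Swalk_reflectBelow (by omega), Nat.sub_sub_self hk.le, sub_nonpos] at this

theorem mem_runningMinAt_shift {b d : ℕ} {ω : Ω} :
    ω ∈ runningMinAt (fun i => X (b + i)) d ↔ ∀ k < d, Swalk X (b + d) ω ≤ Swalk X (b + k) ω := by
  simp only [runningMinAt, Set.mem_ofPred_eq, Swalk_shift, sub_le_sub_iff_right]

theorem mem_posForever_shift {k : ℕ} {ω : Ω} :
    ω ∈ posForever (fun i => X (k + i)) ↔ ∀ j, 1 ≤ j → Swalk X k ω < Swalk X (k + j) ω := by
  simp only [posForever, Set.mem_ofPred_eq, Swalk_shift, sub_pos]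

theorem runningMinAt_succ_eq_biUnion (n : ℕ) :
    runningMinAt X (n + 1) = ⋃ m ∈ Finset.range (n + 1),
      firstNonposAt X m ∩ runningMinAt (fun i => X (m + 1 + i)) (n - m) := by
  ext ω
  simp only [Set.mem_iUnion, Set.mem_inter_iff, Finset.mem_range, exists_prop,
    mem_runningMinAt_shift]
  constructor
  · intro h
    have hend : Swalk X (n + 1) ω ≤ 0 := by simpa using h 0 (by omega)
    have hex : ∃ m, Swalk X (m + 1) ω ≤ 0 := ⟨n, hend⟩
    classical
    have hm := Nat.find_spec hex
    have hmn : Nat.find hex ≤ n := Nat.find_min' hex hend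
    refine ⟨Nat.find hex, by omega, ⟨fun j hj hjm => ?_, hm⟩, fun k hk => ?_⟩
    · have := Nat.find_min hex (m := j - 1) (by omega)
      rwa [Nat.sub_add_cancel hj, not_le] at this
    · rw [show Nat.find hex + 1 + (n - Nat.find hex) = n + 1 by omega]
      exact h _ (by omega)
  · rintro ⟨m, hmn, ⟨hpos, hm⟩, hmin⟩
    rw [show m + 1 + (n - m) = n + 1 by omega] at hmin
    have hend : Swalk X (n + 1) ω ≤ Swalk X (m + 1) ω := by
      rcases Nat.lt_or_ge m n with hlt | hge
      · simpa using hmin 0 (by omega)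
      · rw [show m = n by omega]
    intro k hk
    rcases Nat.lt_or_ge m k with hmk | hkm
    · simpa [show m + 1 + (k - (m + 1)) = k by omega] using hmin (k - (m + 1)) (by omega)
    · rcases Nat.eq_zero_or_pos k with rfl | hk0
      · simpa using hend.trans hm
      · exact (hend.trans hm).trans (hpos k hk0 hkm).le

theorem pairwise_disjoint_lastMinAt : Pairwise (Disjoint on lastMinAt X) := by
  refine (pairwise_disjoint_on _).mpr fun n n' hlt => ?_
  refine Set.disjoint_left.mpr fun ω hn hn' => ?_
  have hrise := mem_posForever_shift.mp hn.2 (n' - n) (by omega)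
  rw [Nat.add_sub_cancel' hlt.le] at hrise
  exact (hn'.1 n hlt).not_gt hrise

theorem mem_iUnion_lastMinAt {ω : Ω} (h : ∀ᶠ n in atTop, 0 < Swalk X n ω) :
    ω ∈ ⋃ n, lastMinAt X n := by
  obtain ⟨k, hbefore, hafter⟩ :=
    exists_last_argmin_of_eventually_gt (s := fun n => Swalk X n ω) (by simpa using h)
  exact Set.mem_iUnion.mpr ⟨k, hbefore, mem_posForever_shift.mpr fun j hj => hafter _ (by omega)⟩

end Events

section Measurability

variable {mΩ : MeasurableSpace Ω} {X : ℕ → Ω → ℤ}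

theorem measurable_Swalk {n : ℕ} (hX : ∀ i < n, Measurable (X i)) : Measurable (Swalk X n) :=
  Finset.measurable_sum _ fun i hi => hX i (Finset.mem_range.mp hi)

theorem measurableSet_nonposUntil {n : ℕ} (hX : ∀ i < n, Measurable (X i)) :
    MeasurableSet (nonposUntil X n) := by
  simp only [nonposUntil, Set.ofPred_forall]
  exact .iInter fun j => .iInter fun _ => .iInter fun hj =>
    measurableSet_le (measurable_Swalk fun i hi => hX i (by omega)) measurable_const

theorem measurableSet_firstNonposAt {n : ℕ} (hX : ∀ i < n + 1, Measurable (X i)) :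
    MeasurableSet (firstNonposAt X n) := by
  simp only [firstNonposAt, Set.ofPred_and, Set.ofPred_forall]
  exact .inter (.iInter fun j => .iInter fun _ => .iInter fun hj =>
      measurableSet_lt measurable_const (measurable_Swalk fun i hi => hX i (by omega)))
    (measurableSet_le (measurable_Swalk hX) measurable_const)

theorem measurableSet_runningMinAt {n : ℕ} (hX : ∀ i < n, Measurable (X i)) :
    MeasurableSet (runningMinAt X n) := by
  simp only [runningMinAt, Set.ofPred_forall]
  exact .iInter fun k => .iInter fun hk =>
    measurableSet_le (measurable_Swalk hX) (measurable_Swalk fun i hi => hX i (by omega))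

theorem measurableSet_posForever (hX : ∀ i, Measurable (X i)) :
    MeasurableSet (posForever X) := by
  simp only [posForever, Set.ofPred_forall]
  exact .iInter fun j => .iInter fun _ =>
    measurableSet_lt measurable_const (measurable_Swalk fun i _ => hX i)

theorem measurableSet_lastMinAt (hX : ∀ i, Measurable (X i)) (n : ℕ) :
    MeasurableSet (lastMinAt X n) :=
  (measurableSet_runningMinAt fun i _ => hX i).inter (measurableSet_posForever fun _ => hX _)

end Measurability

section Independence

variable {mΩ : MeasurableSpace Ω} {β : Type*} [mβ : MeasurableSpace β] {X : ℕ → Ω → β}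

abbrev incrSigma (X : ℕ → Ω → β) (s : Set ℕ) : MeasurableSpace Ω := ⨆ i ∈ s, mβ.comap (X i)

theorem measurable_incrSigma {s : Set ℕ} {i : ℕ} (hi : i ∈ s) :
    Measurable[incrSigma X s] (X i) :=
  Measurable.of_comap_le (le_iSup₂ (f := fun j (_ : j ∈ s) => mβ.comap (X j)) i hi)

theorem measure_inter_eq_mul_of_past_future {P : Measure Ω} (hmeas : ∀ i, Measurable (X i))
    (hindep : iIndepFun X P) {k : ℕ} {s t : Set Ω} (hs : MeasurableSet[incrSigma X (Set.Iio k)] s)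
    (ht : MeasurableSet[incrSigma X (Set.Ici k)] t) : P (s ∩ t) = P s * P t :=
  (Indep_iff _ _ _).mp (indep_iSup_of_disjoint (fun i => (hmeas i).comap_le)
    ((iIndepFun_iff_iIndep _ _ _).mp hindep) (Set.Iio_disjoint_Ici le_rfl)) s t hs ht

end Independence

section IID

variable [MeasurableSpace Ω] {P : Measure Ω}

structure IsIID {β : Type*} [MeasurableSpace β] (X : ℕ → Ω → β) (P : Measure Ω) : Prop where
  measurable : ∀ i, Measurable (X i)
  indep : iIndepFun X P
  identDistrib : ∀ i, IdentDistrib (X i) (X 0) P P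

namespace IsIID

variable {β : Type*} [MeasurableSpace β] {X : ℕ → Ω → β} {e : ℕ → ℕ}

theorem comp (hX : IsIID X P) (he : e.Injective) : IsIID (fun i => X (e i)) P :=
  ⟨fun _ => hX.measurable _, hX.indep.precomp he,
    fun _ => (hX.identDistrib _).trans (hX.identDistrib _).symm⟩

theorem map_comp_eq (hX : IsIID X P) (he : e.Injective) :
    P.map (fun ω i => X (e i) ω) = P.map (fun ω i => X i ω) := by
  rw [(hX.indep.precomp he).map_fun_eq_infinitePi_map (fun i => hX.measurable (e i)),
    hX.indep.map_fun_eq_infinitePi_map hX.measurable]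
  simp only [(hX.identDistrib _).map_eq]

theorem measure_preimage_comp (hX : IsIID X P) (he : e.Injective) {F : Set (ℕ → β)}
    (hF : MeasurableSet F) :
    P ((fun ω i => X (e i) ω) ⁻¹' F) = P ((fun ω i => X i ω) ⁻¹' F) := by
  rw [← Measure.map_apply (measurable_pi_lambda _ fun i => hX.measurable (e i)) hF,
    hX.map_comp_eq he, Measure.map_apply (measurable_pi_lambda _ hX.measurable) hF]

end IsIID

variable {X : ℕ → Ω → ℤ}

/-- Every walk event of `X` is, definitionally, the preimage of the same event of `coord` under
`ω ↦ (X i ω)ᵢ`. -/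
abbrev coord : ℕ → (ℕ → ℤ) → ℤ := fun i x => x i

theorem IsIID.measure_nonposUntil_comp (hX : IsIID X P) {e : ℕ → ℕ} (he : e.Injective)
    (n : ℕ) : P (nonposUntil (fun i => X (e i)) n) = P (nonposUntil X n) :=
  hX.measure_preimage_comp he
    (measurableSet_nonposUntil (X := coord) fun i _ => measurable_pi_apply i)

theorem IsIID.measure_posForever_comp (hX : IsIID X P) {e : ℕ → ℕ} (he : e.Injective) :
    P (posForever (fun i => X (e i))) = P (posForever X) :=
  hX.measure_preimage_comp he (measurableSet_posForever (X := coord) measurable_pi_apply)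

theorem IsIID.measure_runningMinAt (hX : IsIID X P) (n : ℕ) :
    P (runningMinAt X n) = P (nonposUntil X n) := by
  rw [runningMinAt_eq_nonposUntil_reflectBelow,
    hX.measure_nonposUntil_comp (reflectBelow_injective n)]

theorem IsIID.measure_nonposUntil_succ (hX : IsIID X P) (n : ℕ) :
    P (nonposUntil X (n + 1)) =
      ∑ m ∈ Finset.range (n + 1), P (firstNonposAt X m) * P (nonposUntil X (n - m)) := by
  rw [← hX.measure_runningMinAt, runningMinAt_succ_eq_biUnion, measure_biUnion_finset]
  · refine Finset.sum_congr rfl fun m _ => ?_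
    rw [measure_inter_eq_mul_of_past_future (k := m + 1) hX.measurable hX.indep
      (measurableSet_firstNonposAt fun _ hi => measurable_incrSigma hi)
      (measurableSet_runningMinAt fun _ _ => measurable_incrSigma (Nat.le_add_right _ _)),
      (hX.comp (add_right_injective (m + 1))).measure_runningMinAt,
      hX.measure_nonposUntil_comp (add_right_injective (m + 1))]
  · exact fun m _ m' _ hne =>
      (pairwise_disjoint_firstNonposAt hne).mono Set.inter_subset_left Set.inter_subset_left
  · exact fun m _ => (measurableSet_firstNonposAt fun i _ => hX.measurable i).inter
      (measurableSet_runningMinAt fun i _ => hX.measurable _)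

theorem IsIID.measure_lastMinAt (hX : IsIID X P) (n : ℕ) :
    P (lastMinAt X n) = P (nonposUntil X n) * P (posForever X) := by
  rw [lastMinAt, measure_inter_eq_mul_of_past_future (k := n) hX.measurable hX.indep
      (measurableSet_runningMinAt fun _ hi => measurable_incrSigma hi)
      (measurableSet_posForever fun _ => measurable_incrSigma (Nat.le_add_right _ _)),
    hX.measure_runningMinAt, hX.measure_posForever_comp (add_right_injective n)]

theorem IsIID.tsum_measure_lastMinAt (hX : IsIID X P) [IsProbabilityMeasure P]
    (hpos : ∀ᵐ ω ∂P, ∀ᶠ n in atTop, 0 < Swalk X n ω) :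
    ∑' n, P (lastMinAt X n) = 1 := by
  have hmeas := MeasurableSet.iUnion (measurableSet_lastMinAt hX.measurable)
  calc ∑' n, P (lastMinAt X n) = P (⋃ n, lastMinAt X n) :=
        (measure_iUnion pairwise_disjoint_lastMinAt (measurableSet_lastMinAt hX.measurable)).symm
    _ = 1 := by
        rw [← measure_univ (μ := P), ← ae_mem_iff_measure_eq hmeas.nullMeasurableSet]
        exact hpos.mono fun ω => mem_iUnion_lastMinAt

theorem IsIID.ae_eventually_Swalk_pos (hX : IsIID X P)
    (hint : Integrable (fun ω => (X 0 ω : ℝ)) P) (hmean : 0 < ∫ ω, (X 0 ω : ℝ) ∂P) :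
    ∀ᵐ ω ∂P, ∀ᶠ n in atTop, 0 < Swalk X n ω := by
  have hcast : Measurable (fun z : ℤ => (z : ℝ)) := measurable_of_countable _
  have hslln := strong_law_ae_real (fun i ω => (X i ω : ℝ)) hint
    (fun i j hij => (hX.indep.indepFun hij).comp hcast hcast)
    fun i => (hX.identDistrib i).comp hcast
  filter_upwards [hslln] with ω hω
  filter_upwards [hω.eventually (eventually_gt_nhds hmean)] with n hn
  have hsum : (0 : ℝ) < Swalk X n ω := by
    simpa [Swalk] using ((div_pos_iff.mp hn).resolve_right fun h => h.2.not_ge n.cast_nonneg).1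
  exact_mod_cast hsum

theorem IsIID.measure_posForever_mul_tsum (hX : IsIID X P) [IsProbabilityMeasure P]
    (hpos : ∀ᵐ ω ∂P, ∀ᶠ n in atTop, 0 < Swalk X n ω) :
    P (posForever X) * ∑' n, P (nonposUntil X n) = 1 := by
  simpa only [hX.measure_lastMinAt, ENNReal.tsum_mul_right, mul_comm] using
    hX.tsum_measure_lastMinAt hpos

end IID

section GeneratingFunctions

def RenewalEquation {R : Type*} [Semiring R] (b q : ℕ → R) : Prop :=
  ∀ n, q (n + 1) = ∑ m ∈ Finset.range (n + 1), b m * q (n - m)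

theorem RenewalEquation.pow_mul {R : Type*} [CommSemiring R] {b q : ℕ → R}
    (h : RenewalEquation b q) (z : R) :
    RenewalEquation (fun n => z ^ (n + 1) * b n) (fun n => z ^ n * q n) := by
  intro n
  dsimp only
  rw [h n, Finset.mul_sum]
  refine Finset.sum_congr rfl fun m hm => ?_
  rw [show n + 1 = m + 1 + (n - m) by have := Finset.mem_range.mp hm; omega, pow_add]
  ring

theorem RenewalEquation.one_sub_tsum_mul_tsum {R : Type*} [NormedRing R] [CompleteSpace R]
    {b q : ℕ → R} (h : RenewalEquation b q) (hq0 : q 0 = 1) (hb : Summable fun n => ‖b n‖)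
    (hq : Summable fun n => ‖q n‖) :
    (1 - ∑' n, b n) * ∑' n, q n = 1 := by
  have hprod : (∑' n, b n) * ∑' n, q n = ∑' n, q n - 1 := by
    rw [tsum_mul_tsum_eq_tsum_sum_range_of_summable_norm hb hq, ← tsum_congr h,
      hq.of_norm.tsum_eq_zero_add, hq0, add_sub_cancel_left]
  rw [sub_mul, one_mul, hprod, sub_sub_cancel]

theorem one_sub_tsum_pow_succ_mul_sub {R : Type*} [CommRing R] [TopologicalSpace R]
    [IsTopologicalRing R] [T2Space R] {z : R} {q : ℕ → R} (hq0 : q 0 = 1)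
    (hq : Summable fun n => z ^ n * q n) :
    1 - ∑' n, z ^ (n + 1) * (q n - q (n + 1)) = (1 - z) * ∑' n, z ^ n * q n := by
  have hsplit := hq.tsum_eq_zero_add
  rw [pow_zero, hq0, one_mul] at hsplit
  rw [tsum_congr fun n => show z ^ (n + 1) * (q n - q (n + 1)) =
      z * (z ^ n * q n) - z ^ (n + 1) * q (n + 1) by ring,
    (hq.mul_left z).tsum_sub ((summable_nat_add_iff 1).mpr hq), hq.tsum_mul_left]
  linear_combination -hsplit

theorem summable_norm_pow_mul {𝕜 : Type*} [NormedDivisionRing 𝕜] {z : 𝕜} (hz : ‖z‖ < 1)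
    {c : ℕ → 𝕜} (hc : ∀ n, ‖c n‖ ≤ 1) : Summable fun n => ‖z ^ n * c n‖ := by
  refine .of_nonneg_of_le (fun _ => norm_nonneg _) (fun n => ?_)
    (summable_geometric_of_lt_one (norm_nonneg _) hz)
  rw [norm_mul, norm_pow]
  exact mul_le_of_le_one_right (by positivity) (hc n)

end GeneratingFunctions

section Duality

variable [MeasurableSpace Ω] {P : Measure Ω} [IsProbabilityMeasure P] {X : ℕ → Ω → ℤ}

theorem norm_pr_le_one (E : Set Ω) : ‖pr P E‖ ≤ 1 := by
  rw [pr, Real.norm_of_nonneg ENNReal.toReal_nonneg]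
  exact measureReal_le_one

theorem pr_nonposUntil_zero : pr P (nonposUntil X 0) = 1 := by
  have : nonposUntil X 0 = Set.univ := Set.eq_univ_of_forall fun _ _ h1 h2 => by omega
  rw [pr, this, measure_univ, ENNReal.toReal_one]

theorem pr_firstPosAt (hX : ∀ i, Measurable (X i)) (n : ℕ) :
    pr P (firstPosAt X n) = pr P (nonposUntil X n) - pr P (nonposUntil X (n + 1)) := by
  have := measureReal_inter_add_sdiff (μ := P) (s := nonposUntil X n)
    (t := {ω | Swalk X (n + 1) ω ≤ 0})
    (measurableSet_le (measurable_Swalk fun i _ => hX i) measurable_const)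
  rw [← nonposUntil_succ, ← firstPosAt_eq_diff] at this
  simp only [pr, ← measureReal_def]
  linarith

theorem IsIID.renewalEquation (hX : IsIID X P) :
    RenewalEquation (fun n => pr P (firstNonposAt X n)) (fun n => pr P (nonposUntil X n)) := by
  intro n
  simp only [pr, hX.measure_nonposUntil_succ, ENNReal.toReal_sum fun _ _ =>
    ENNReal.mul_ne_top (measure_ne_top _ _) (measure_ne_top _ _), ENNReal.toReal_mul]

theorem IsIID.duality (hX : IsIID X P) {z : ℝ} (hz0 : 0 ≤ z) (hz1 : z < 1) :
    (1 - ∑' n, z ^ (n + 1) * pr P (firstPosAt X n)) *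
      (1 - ∑' n, z ^ (n + 1) * pr P (firstNonposAt X n)) = 1 - z := by
  have hz : ‖z‖ < 1 := by rwa [Real.norm_of_nonneg hz0]
  have hq : Summable fun n => ‖z ^ n * pr P (nonposUntil X n)‖ :=
    summable_norm_pow_mul hz fun _ => norm_pr_le_one _
  have hb : Summable fun n => ‖z ^ (n + 1) * pr P (firstNonposAt X n)‖ := by
    simpa only [pow_succ, mul_assoc] using summable_norm_pow_mul hz fun _ =>
      (norm_mul_le _ _).trans (mul_le_one₀ hz.le (norm_nonneg _) (norm_pr_le_one _))
  have hrenewal := (hX.renewalEquation.pow_mul z).one_sub_tsum_mul_tsum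
    (by simp [pr_nonposUntil_zero]) hb hq
  simp only [pr_firstPosAt hX.measurable]
  rw [one_sub_tsum_pow_succ_mul_sub pr_nonposUntil_zero hq.of_norm]
  linear_combination (1 - z) * hrenewal

theorem IsIID.pr_posForever_mul_tsum (hX : IsIID X P)
    (hpos : ∀ᵐ ω ∂P, ∀ᶠ n in atTop, 0 < Swalk X n ω) :
    pr P (posForever X) * ∑' n, pr P (nonposUntil X n) = 1 := by
  have h := congrArg ENNReal.toReal (hX.measure_posForever_mul_tsum hpos)
  rwa [ENNReal.toReal_mul, ENNReal.tsum_toReal_eq fun _ => measure_ne_top _ _,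
    ENNReal.toReal_one] at h

end Duality

end RandomWalk

/-- the generating-function duality identity
`(1 - E z^{τ₊})(1 - E[z^τ; τ < ∞]) = 1 - z` for `z ∈ [0,1)`, and the consequence
`P(τ = ∞) · E τ₊ = 1` (with `E τ₊ = Σ_{n≥0} P(τ₊ > n)`). -/
theorem duality_identity_and_renewal
    {Ω : Type*} [MeasurableSpace Ω] (P : Measure Ω) [IsProbabilityMeasure P]
    (X : ℕ → Ω → ℤ)
    -- `X` are i.i.d. under `P`
    (hXmeas : ∀ i, Measurable (X i))
    (hXindep : iIndepFun X P)
    (hXident : ∀ i, IdentDistrib (X i) (X 0) P P)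
    -- positive drift `E X₁ = a > 0`
    (a : ℝ) (ha : 0 < a)
    (hXint : Integrable (fun ω => (X 0 ω : ℝ)) P)
    (hmean : ∫ ω, (X 0 ω : ℝ) ∂P = a) :
    (∀ z : ℝ, 0 ≤ z → z < 1 →
      -- `E z^{τ₊} = Σ_{n≥0} z^{n+1} P(τ₊ = n+1)` (here `τ₊ < ∞` a.s.)
      (1 - ∑' n : ℕ, z ^ (n + 1) *
          pr P {ω | (∀ j : ℕ, 1 ≤ j → j ≤ n → Swalk X j ω ≤ 0) ∧ 0 < Swalk X (n + 1) ω})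
        -- `E[z^τ; τ < ∞] = Σ_{n≥0} z^{n+1} P(τ = n+1)`
        * (1 - ∑' n : ℕ, z ^ (n + 1) *
          pr P {ω | (∀ j : ℕ, 1 ≤ j → j ≤ n → 0 < Swalk X j ω) ∧ Swalk X (n + 1) ω ≤ 0})
        = 1 - z) ∧
    pr P {ω | ∀ j : ℕ, 1 ≤ j → 0 < Swalk X j ω}
        * (∑' n : ℕ, pr P {ω | ∀ j : ℕ, 1 ≤ j → j ≤ n → Swalk X j ω ≤ 0}) = 1 := by
  have hX : RandomWalk.IsIID X P := ⟨hXmeas, hXindep, hXident⟩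
  exact ⟨fun z hz0 hz1 => hX.duality hz0 hz1,
    hX.pr_posForever_mul_tsum (hX.ae_eventually_Swalk_pos hXint (hmean ▸ ha))⟩
end

section
/- For all integers n ≥ 1, x ≥ 1, and r ≥ 0, one has the exact identity P(M_n = x, S_n = x − r) = Σ_{k=0}^n P(S_k = x, τ > k) · P(S_{n−k} = −r, τ₊ > n − k), where by duality P(S_k = x, S_k − S_j > 0 for all j < k) = P(S_k = x, τ > k). -/
open MeasureTheory ProbabilityTheory Filter Real

variable {Ω : Type*}

/-!
Split the event `{M_n = x, S_n = x - r}` according to the first time `k` at which the maximum `x`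
is attained. Before `k` the path stays strictly below `x` and ends at `x`; after `k` it stays weakly
below `S_k = x` and ends `r` lower. These two conditions concern the disjoint blocks
`X_0, …, X_{k-1}` and `X_k, …, X_{n-1}`, so they are independent. Read backwards from time `k`, the
first one says that a `k`-step walk stays positive and ends at `x` (duality); started afresh at
time `k`, the second says that an `(n-k)`-step walk stays nonpositive and ends at `-r`. The law of
an i.i.d. block is invariant under injective reindexing (here reversal and shift), so these events
have the probabilities of the two factors.
-/

namespace ProbabilityTheory

variable {ι β : Type*} [MeasurableSpace Ω] [MeasurableSpace β] {P : Measure Ω} {X : ι → Ω → β}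

/-- Both tuples have law `Measure.pi fun _ => P.map (X i₀)`. -/
theorem iIndepFun.measure_comp_preimage_eq {κ : Type*} [Fintype κ] {i₀ : ι}
    (hindep : iIndepFun X P) (hident : ∀ i, IdentDistrib (X i) (X i₀) P P)
    {g g' : κ → ι} (hg : g.Injective) (hg' : g'.Injective) {s : Set (κ → β)}
    (hs : MeasurableSet s) :
    P ((fun ω k => X (g k) ω) ⁻¹' s) = P ((fun ω k => X (g' k) ω) ⁻¹' s) := by
  have := hindep.isProbabilityMeasure
  have hmeas (g : κ → ι) : AEMeasurable (fun ω k => X (g k) ω) P :=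
    aemeasurable_pi_lambda _ fun k => (hident (g k)).aemeasurable_fst
  have law {g : κ → ι} (hg : g.Injective) :
      P.map (fun ω k => X (g k) ω) = Measure.pi fun _ => P.map (X i₀) := by
    rw [(hindep.precomp hg).map_fun_eq_pi_map fun k => (hident (g k)).aemeasurable_fst]
    exact congrArg Measure.pi (funext fun k => (hident (g k)).map_eq)
  rw [← Measure.map_apply_of_aemeasurable (hmeas g) hs,
    ← Measure.map_apply_of_aemeasurable (hmeas g') hs, law hg, law hg']

theorem iIndepFun.indepFun_comp_of_disjoint {κ κ' : Type*} [Fintype κ] [Fintype κ']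
    (hmeas : ∀ i, Measurable (X i)) (hindep : iIndepFun X P) {g : κ → ι} {g' : κ' → ι}
    (hdisj : Disjoint (Set.range g) (Set.range g')) :
    IndepFun (fun ω k => X (g k) ω) (fun ω k => X (g' k) ω) P := by
  classical
  have hdisj' : Disjoint (Finset.univ.image g) (Finset.univ.image g') := by
    rw [← Finset.disjoint_coe]
    simpa using hdisj
  exact (hindep.indepFun_finset _ _ hdisj' hmeas).comp
    (φ := fun v k => v ⟨g k, by simp⟩) (ψ := fun v k => v ⟨g' k, by simp⟩)
    (measurable_pi_lambda _ fun k => measurable_pi_apply _)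
    (measurable_pi_lambda _ fun k => measurable_pi_apply _)

end ProbabilityTheory

theorem Finset.sup'_range_eq_iff {α : Type*} [LinearOrder α] (s : ℕ → α) {n : ℕ}
    (h : (Finset.range (n + 1)).Nonempty) (x : α) :
    (Finset.range (n + 1)).sup' h s = x ↔
      ∃ k ≤ n, s k = x ∧ (∀ j < k, s j < x) ∧ ∀ j ≤ n, s j ≤ x := by
  constructor
  · intro hx
    have hle (j : ℕ) (hj : j ≤ n) : s j ≤ x :=
      hx ▸ Finset.le_sup' s (Finset.mem_range.2 (Nat.lt_succ_of_le hj))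
    have hex : ∃ k, k ≤ n ∧ s k = x := by
      obtain ⟨k, hk, hks⟩ := Finset.exists_mem_eq_sup' h s
      exact ⟨k, Nat.lt_succ_iff.1 (Finset.mem_range.1 hk), hks ▸ hx⟩
    classical
    obtain ⟨hkn, hkx⟩ := Nat.find_spec hex
    refine ⟨Nat.find hex, hkn, hkx, fun j hj => ?_, hle⟩
    exact (hle j (by omega)).lt_of_ne fun hjx => Nat.find_min hex hj ⟨by omega, hjx⟩
  · rintro ⟨k, hk, hkx, -, hle⟩
    refine le_antisymm (Finset.sup'_le _ _ fun j hj => hle j ?_) ?_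
    · exact Nat.lt_succ_iff.1 (Finset.mem_range.1 hj)
    · exact hkx ▸ Finset.le_sup' s (Finset.mem_range.2 (Nat.lt_succ_of_le hk))

section Walk

/-- `{S_k = x, τ > k}`. -/
def posPathTo (X : ℕ → Ω → ℤ) (k : ℕ) (x : ℤ) : Set Ω :=
  {ω | Swalk X k ω = x ∧ ∀ j : ℕ, 1 ≤ j → j ≤ k → 0 < Swalk X j ω}

/-- `{S_m = y, τ₊ > m}`. -/
def nonposPathTo (X : ℕ → Ω → ℤ) (m : ℕ) (y : ℤ) : Set Ω :=
  {ω | Swalk X m ω = y ∧ ∀ j : ℕ, 1 ≤ j → j ≤ m → Swalk X j ω ≤ 0}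

/-- Walk events up to time `m` of any process `X` are the preimages of the same events for this
process under `ω ↦ (X i ω)_{i < m}`. -/
def tupleCoord (m i : ℕ) (a : Fin m → ℤ) : ℤ := if h : i < m then a ⟨i, h⟩ else 0

variable {Ω' : Type*} {X : ℕ → Ω → ℤ}

theorem Swalk_congr {Y : ℕ → Ω' → ℤ} {ω : Ω} {ω' : Ω'} {j : ℕ}
    (h : ∀ i < j, X i ω = Y i ω') : Swalk X j ω = Swalk Y j ω' :=
  Finset.sum_congr rfl fun i hi => h i (Finset.mem_range.1 hi)

theorem Swalk_tupleCoord (ω : Ω) {j m : ℕ} (hj : j ≤ m) :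
    Swalk (tupleCoord m) j (fun i : Fin m => X i ω) = Swalk X j ω :=
  Swalk_congr fun _ hi => dif_pos (hi.trans_le hj)

theorem posPathTo_eq_preimage (k : ℕ) (x : ℤ) :
    posPathTo X k x = (fun ω (i : Fin k) => X i ω) ⁻¹' posPathTo (tupleCoord k) k x := by
  ext ω
  simp +contextual [posPathTo, Swalk_tupleCoord]

theorem nonposPathTo_eq_preimage (m : ℕ) (y : ℤ) :
    nonposPathTo X m y = (fun ω (i : Fin m) => X i ω) ⁻¹' nonposPathTo (tupleCoord m) m y := by
  ext ω
  simp +contextual [nonposPathTo, Swalk_tupleCoord]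

theorem Swalk_shift (k j : ℕ) (ω : Ω) :
    Swalk (fun i => X (k + i)) j ω = Swalk X (k + j) ω - Swalk X k ω := by
  simp only [Swalk, Finset.sum_range_add, add_sub_cancel_left]

theorem Swalk_reverse {k j : ℕ} (hj : j ≤ k) (ω : Ω) :
    Swalk (fun i => X (k - 1 - i)) j ω = Swalk X k ω - Swalk X (k - j) ω := by
  obtain ⟨l, rfl⟩ := Nat.exists_eq_add_of_le hj
  rw [add_comm j l, Nat.add_sub_cancel, ← Swalk_shift, Swalk, Swalk,
    ← Finset.sum_range_reflect]
  refine Finset.sum_congr rfl fun i hi => ?_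
  rw [Finset.mem_range] at hi
  congr 1
  omega

theorem mem_posPathTo_reverse_iff {k : ℕ} {x : ℤ} {ω : Ω} :
    ω ∈ posPathTo (fun i => X (k - 1 - i)) k x ↔
      Swalk X k ω = x ∧ ∀ j < k, Swalk X j ω < x := by
  have hS0 : Swalk X 0 ω = 0 := Finset.sum_range_zero _
  simp only [posPathTo, Set.mem_ofPred_eq, Swalk_reverse le_rfl, Nat.sub_self, hS0, sub_zero]
  refine and_congr_right fun hk => ⟨fun h j hj => ?_, fun h j hj1 hj2 => ?_⟩
  · have := h (k - j) (by omega) (by omega)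
    rwa [Swalk_reverse (by omega), Nat.sub_sub_self hj.le, sub_pos, hk] at this
  · rw [Swalk_reverse hj2, sub_pos, hk]
    exact h (k - j) (by omega)

theorem mem_nonposPathTo_shift_iff {k m : ℕ} {y : ℤ} {ω : Ω} :
    ω ∈ nonposPathTo (fun i => X (k + i)) m y ↔
      Swalk X (k + m) ω - Swalk X k ω = y ∧
        ∀ j : ℕ, 1 ≤ j → j ≤ m → Swalk X (k + j) ω ≤ Swalk X k ω := by
  simp only [nonposPathTo, Set.mem_ofPred_eq, Swalk_shift, sub_nonpos]

theorem pairwise_disjoint_posPathTo_reverse (x : ℤ) :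
    Pairwise fun k k' => Disjoint (posPathTo (fun i => X (k - 1 - i)) k x)
      (posPathTo (fun i => X (k' - 1 - i)) k' x) := by
  intro k k' hne
  rw [Set.disjoint_left]
  intro ω h h'
  rw [mem_posPathTo_reverse_iff] at h h'
  rcases hne.lt_or_gt with hlt | hlt
  · exact (h'.2 k hlt).ne h.1
  · exact (h.2 k' hlt).ne h'.1

theorem setOf_Mwalk_eq_and_Swalk_eq_biUnion (n : ℕ) (x : ℤ) (r : ℕ) :
    {ω | Mwalk X n ω = x ∧ Swalk X n ω = x - r} =
      ⋃ k ∈ Finset.range (n + 1), posPathTo (fun i => X (k - 1 - i)) k x ∩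
        nonposPathTo (fun i => X (k + i)) (n - k) (-r) := by
  ext ω
  simp only [Mwalk, Finset.sup'_range_eq_iff, Set.mem_ofPred_eq, Set.mem_iUnion,
    Set.mem_inter_iff, mem_posPathTo_reverse_iff, mem_nonposPathTo_shift_iff, Finset.mem_range,
    exists_prop, Nat.lt_succ_iff]
  constructor
  · rintro ⟨⟨k, hk, hkx, hlt, hle⟩, hn⟩
    refine ⟨k, hk, ⟨hkx, hlt⟩, ?_, fun j _ hj => ?_⟩
    · rw [Nat.add_sub_cancel' hk, hn, hkx]
      ring
    · rw [hkx]
      exact hle _ (by omega)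
  · rintro ⟨k, hk, ⟨hkx, hlt⟩, hn, hle⟩
    rw [Nat.add_sub_cancel' hk, hkx] at hn
    refine ⟨⟨k, hk, hkx, hlt, fun j hj => ?_⟩, by linarith⟩
    rcases lt_or_ge j k with hjk | hjk
    · exact (hlt j hjk).le
    obtain ⟨_ | i, rfl⟩ := Nat.exists_eq_add_of_le hjk
    · exact hkx.le
    · rw [← hkx]
      exact hle _ (by omega) (by omega)

end Walk

section WalkProbability

variable [MeasurableSpace Ω] {P : Measure Ω} {X : ℕ → Ω → ℤ}

theorem measurableSet_posPathTo (hX : ∀ i, Measurable (X i)) (k : ℕ) (x : ℤ) :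
    MeasurableSet (posPathTo X k x) := by
  rw [posPathTo_eq_preimage]
  exact measurable_pi_lambda (fun ω (i : Fin k) => X i ω) (fun i => hX i) .of_discrete

theorem measurableSet_nonposPathTo (hX : ∀ i, Measurable (X i)) (m : ℕ) (y : ℤ) :
    MeasurableSet (nonposPathTo X m y) := by
  rw [nonposPathTo_eq_preimage]
  exact measurable_pi_lambda (fun ω (i : Fin m) => X i ω) (fun i => hX i) .of_discrete

theorem measure_posPathTo_reverse_inter_nonposPathTo_shift
    (hmeas : ∀ i, Measurable (X i)) (hindep : iIndepFun X P)
    (hident : ∀ i, IdentDistrib (X i) (X 0) P P) (k m : ℕ) (x y : ℤ) :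
    P (posPathTo (fun i => X (k - 1 - i)) k x ∩ nonposPathTo (fun i => X (k + i)) m y) =
      P (posPathTo X k x) * P (nonposPathTo X m y) := by
  have hrev : (fun i : Fin k => k - 1 - (i : ℕ)).Injective := fun a b h =>
    Fin.ext (by simp only at h; omega)
  have hshift : (fun i : Fin m => k + (i : ℕ)).Injective := fun a b h => Fin.ext (by simpa using h)
  have hdisj : Disjoint (Set.range fun i : Fin k => k - 1 - (i : ℕ))
      (Set.range fun i : Fin m => k + (i : ℕ)) := by
    rw [Set.disjoint_left]
    rintro _ ⟨a, rfl⟩ ⟨b, hb⟩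
    dsimp only at hb
    omega
  rw [posPathTo_eq_preimage, nonposPathTo_eq_preimage,
    (hindep.indepFun_comp_of_disjoint hmeas hdisj).measure_inter_preimage_eq_mul _ _
      .of_discrete .of_discrete,
    hindep.measure_comp_preimage_eq hident hrev Fin.val_injective .of_discrete,
    hindep.measure_comp_preimage_eq hident hshift Fin.val_injective .of_discrete,
    ← posPathTo_eq_preimage, ← nonposPathTo_eq_preimage]

end WalkProbability

/-- the exact decomposition identity
`P(M_n = x, S_n = x - r) = Σ_{k=0}^n P(S_k = x, τ > k) P(S_{n-k} = -r, τ₊ > n-k)`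
(with the conventions `P(S_0 = x, τ > 0) = 1_{x=0}`, `P(S_0 = -r, τ₊ > 0) = 1_{r=0}`,
which are automatic in the formulation below since `S_0 = 0`). -/
theorem max_decomposition_identity
    {Ω : Type*} [MeasurableSpace Ω] (P : Measure Ω) [IsProbabilityMeasure P]
    (X : ℕ → Ω → ℤ)
    -- `X` are i.i.d. under `P`
    (hXmeas : ∀ i, Measurable (X i))
    (hXindep : iIndepFun X P)
    (hXident : ∀ i, IdentDistrib (X i) (X 0) P P) :
    ∀ n : ℕ, 1 ≤ n → ∀ x : ℤ, 1 ≤ x → ∀ r : ℕ,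
      pr P {ω | Mwalk X n ω = x ∧ Swalk X n ω = x - r}
        = ∑ k ∈ Finset.range (n + 1),
            pr P {ω | Swalk X k ω = x ∧ ∀ j : ℕ, 1 ≤ j → j ≤ k → 0 < Swalk X j ω}
              * pr P {ω | Swalk X (n - k) ω = -(r : ℤ) ∧
                  ∀ j : ℕ, 1 ≤ j → j ≤ n - k → Swalk X j ω ≤ 0} := by
  intro n _ x _ r
  set piece := fun k => posPathTo (fun i => X (k - 1 - i)) k x ∩
    nonposPathTo (fun i => X (k + i)) (n - k) (-r)
  have hdisj : (Finset.range (n + 1) : Set ℕ).PairwiseDisjoint piece := fun _ _ _ _ hne =>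
    (pairwise_disjoint_posPathTo_reverse x hne).mono Set.inter_subset_left
      Set.inter_subset_left
  have hmeas (k : ℕ) : MeasurableSet (piece k) :=
    (measurableSet_posPathTo (fun _ => hXmeas _) _ _).inter
      (measurableSet_nonposPathTo (fun _ => hXmeas _) _ _)
  rw [pr, setOf_Mwalk_eq_and_Swalk_eq_biUnion, measure_biUnion_finset hdisj fun k _ => hmeas k,
    ENNReal.toReal_sum fun k _ => measure_ne_top P _]
  refine Finset.sum_congr rfl fun k _ => ?_
  rw [measure_posPathTo_reverse_inter_nonposPathTo_shift hXmeas hXindep hXident,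
    ENNReal.toReal_mul]
  rfl
end
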